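/- arXiv:1912.01170 — 5 statements merged into one kernel-verified Lean document; each statement's English description precedes it below -/
import Mathlib

section
/- Let 𝒳 be a finite alphabet and let P₁, P₂ be probability mass functions on 𝒳 with full support. Then { γ ≥ 0 : inf{ D(V‖P₁) : V ∈ 𝒫(𝒳), D(V‖P₂) ≤ γ } ≥ γ } = [0, C(P₁,P₂)]. Consequently, the maximum value of γ for which the sequential binary test Φ_seq(γ) achieves Bayesian error exponent γ is the Chernoff information C(P₁,P₂). -/
open Filter

namespace SeqClass

variable {𝒳 : Type*} [Fintype 𝒳] [DecidableEq 𝒳]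

/-- `P` is a probability mass function on `𝒳`. -/
def IsPMF (P : 𝒳 → ℝ) : Prop := (∀ x, 0 ≤ P x) ∧ ∑ x, P x = 1

/-- `P` has full support. -/
def FullSupport (P : 𝒳 → ℝ) : Prop := ∀ x, 0 < P x

/-- Kullback–Leibler divergence `D(P‖Q)`. -/
noncomputable def KL (P Q : 𝒳 → ℝ) : ℝ := ∑ x, P x * Real.log (P x / Q x)

/-- Shannon entropy `H(P)`. -/
noncomputable def shEnt (P : 𝒳 → ℝ) : ℝ := -∑ x, P x * Real.log (P x)

/-- The mixture `(α•P + Q)/(1+α)`. -/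
noncomputable def mix (P Q : 𝒳 → ℝ) (α : ℝ) : 𝒳 → ℝ := fun x => (α * P x + Q x) / (1 + α)

/-- Generalized Jensen–Shannon divergence `GJS(P,Q,α) = α D(P‖P_α) + D(Q‖P_α)`. -/
noncomputable def GJS (P Q : 𝒳 → ℝ) (α : ℝ) : ℝ := α * KL P (mix P Q α) + KL Q (mix P Q α)

/-- Chernoff information `C(P,Q)`. -/
noncomputable def chernoff (P Q : 𝒳 → ℝ) : ℝ :=
  -(⨅ η : (Set.Icc (0:ℝ) 1), Real.log (∑ x, P x ^ (η : ℝ) * Q x ^ (1 - (η : ℝ))))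

/-- Empirical distribution (type) of a finite sequence. -/
noncomputable def empDist {n : ℕ} (x : Fin n → 𝒳) : 𝒳 → ℝ :=
  fun a => ((Finset.univ.filter fun i => x i = a).card : ℝ) / n

/-- Type of the length-`n` prefix of `y`. -/
noncomputable def prefixType {m : ℕ} (y : Fin m → 𝒳) (n : ℕ) : 𝒳 → ℝ :=
  fun a => ((Finset.univ.filter fun k : Fin m => (k : ℕ) < n ∧ y k = a).card : ℝ) / n

/-- i.i.d. product probability of a finite sequence. -/
noncomputable def prodProb {n : ℕ} (P : 𝒳 → ℝ) (x : Fin n → 𝒳) : ℝ := ∏ i, P (x i)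

end SeqClass

/-!
Write `Q_η ∝ P1 ^ η * P2 ^ (1 - η)` for the geometric mixtures and `Z η` for their normaliser.
Since `Q_0 = P2`, `Q_1 = P1` and `log Q_η` is affine in `η`, one has
`D(V‖Q_η) = η D(V‖P1) + (1 - η) D(V‖P2) + log Z η`, so Gibbs' inequality gives
`η D(V‖P1) + (1 - η) D(V‖P2) ≥ -log Z η` for every `V`. At a minimiser `η₀ ∈ [0, 1]` of `log Z`
the right-hand side is `C(P1, P2)`; hence `D(V‖P2) ≤ γ ≤ C` forces `D(V‖P1) ≥ γ`.
Conversely, `log Z` is convex with derivative `E_{Q_η}[log (P1 / P2)]`, and the first-order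
conditions at `η₀` say precisely that `Q_η₀` lies within `C` of both `P1` and `P2`; so for `γ > C`
it is admissible and has `D(Q_η₀‖P1) < γ`.
-/

namespace SeqClass

open Real Finset

variable {𝒳 : Type*} [Fintype 𝒳]

theorem IsPMF.nonempty {P : 𝒳 → ℝ} (hP : IsPMF P) : Nonempty 𝒳 :=
  univ_nonempty_iff.mp <| nonempty_of_sum_ne_zero (hP.2 ▸ one_ne_zero)

theorem KL_self (P : 𝒳 → ℝ) : KL P P = 0 :=
  sum_eq_zero fun x _ => by by_cases h : P x = 0 <;> simp [h]

theorem KL_nonneg {V P : 𝒳 → ℝ} (hV : IsPMF V) (hP : IsPMF P) (hs : FullSupport P) :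
    0 ≤ KL V P := by
  have hterm : ∀ x, P x * InformationTheory.klFun (V x / P x)
      = V x * log (V x / P x) + P x - V x := fun x => by
    rw [InformationTheory.klFun]
    field_simp [(hs x).ne']
  have hKL : KL V P = ∑ x, P x * InformationTheory.klFun (V x / P x) := by
    simp only [hterm, sum_sub_distrib, sum_add_distrib, hV.2, hP.2, KL]
    ring
  rw [hKL]
  exact sum_nonneg fun x _ =>
    mul_nonneg (hP.1 x) (InformationTheory.klFun_nonneg (div_nonneg (hV.1 x) (hs x).le))

theorem KL_eq_KL_add {V Q R : 𝒳 → ℝ} (hQ : ∀ x, Q x ≠ 0) (hR : ∀ x, R x ≠ 0) :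
    KL V Q = KL V R + ∑ x, V x * (log (R x) - log (Q x)) := by
  rw [KL, KL, ← sum_add_distrib]
  refine sum_congr rfl fun x _ => ?_
  by_cases hV : V x = 0
  · simp [hV]
  · rw [log_div hV (hQ x), log_div hV (hR x)]
    ring

section Tilted

variable (P1 P2 : 𝒳 → ℝ)

/-- `log ∑ₓ P1 x ^ η * P2 x ^ (1 - η)`, with the powers written as `exp ∘ log` so that
`log (tilted P1 P2 η x)` simplifies without positivity side conditions. -/
noncomputable def logPartition (η : ℝ) : ℝ :=
  log (∑ x, exp (η * log (P1 x) + (1 - η) * log (P2 x)))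

noncomputable def tilted (η : ℝ) (x : 𝒳) : ℝ :=
  exp (η * log (P1 x) + (1 - η) * log (P2 x) - logPartition P1 P2 η)

noncomputable def tiltedMeanLLR (η : ℝ) : ℝ :=
  ∑ x, tilted P1 P2 η x * (log (P1 x) - log (P2 x))

theorem fullSupport_tilted (η : ℝ) : FullSupport (tilted P1 P2 η) := fun _ => exp_pos _

theorem isPMF_tilted [Nonempty 𝒳] (η : ℝ) : IsPMF (tilted P1 P2 η) := by
  refine ⟨fun x => (fullSupport_tilted P1 P2 η x).le, ?_⟩
  have hZ : 0 < ∑ x, exp (η * log (P1 x) + (1 - η) * log (P2 x)) :=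
    sum_pos (fun x _ => exp_pos _) univ_nonempty
  simp only [tilted, exp_sub, logPartition, exp_log hZ, ← sum_div, div_self hZ.ne']

theorem logPartition_one {P1 : 𝒳 → ℝ} (hP1 : IsPMF P1) (hs1 : FullSupport P1) :
    logPartition P1 P2 1 = 0 := by
  simp [logPartition, exp_log (hs1 _), hP1.2]

theorem logPartition_zero {P2 : 𝒳 → ℝ} (hP2 : IsPMF P2) (hs2 : FullSupport P2) :
    logPartition P1 P2 0 = 0 := by
  simp [logPartition, exp_log (hs2 _), hP2.2]

theorem tilted_one {P1 : 𝒳 → ℝ} (hP1 : IsPMF P1) (hs1 : FullSupport P1) :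
    tilted P1 P2 1 = P1 :=
  funext fun x => by simp [tilted, logPartition_one P2 hP1 hs1, exp_log (hs1 x)]

theorem tilted_zero {P2 : 𝒳 → ℝ} (hP2 : IsPMF P2) (hs2 : FullSupport P2) :
    tilted P1 P2 0 = P2 :=
  funext fun x => by simp [tilted, logPartition_zero P1 hP2 hs2, exp_log (hs2 x)]

theorem KL_tilted_eq {W : 𝒳 → ℝ} (hW : ∑ x, W x = 1) (η η' : ℝ) :
    KL W (tilted P1 P2 η') = KL W (tilted P1 P2 η)
      + (η - η') * ∑ x, W x * (log (P1 x) - log (P2 x))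
      + logPartition P1 P2 η' - logPartition P1 P2 η := by
  rw [KL_eq_KL_add (fun x => (fullSupport_tilted P1 P2 η' x).ne') fun x => (fullSupport_tilted P1 P2 η x).ne']
  have hsum : ∑ x, W x * (log (tilted P1 P2 η x) - log (tilted P1 P2 η' x))
      = ∑ x, ((η - η') * (W x * (log (P1 x) - log (P2 x)))
          + (logPartition P1 P2 η' - logPartition P1 P2 η) * W x) :=
    sum_congr rfl fun x _ => by simp only [tilted, log_exp]; ring
  rw [hsum, sum_add_distrib, ← mul_sum, ← mul_sum, hW]
  ring

theorem chernoff_eq_neg_iInf_logPartition {P1 P2 : 𝒳 → ℝ} (hs1 : FullSupport P1)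
    (hs2 : FullSupport P2) :
    chernoff P1 P2 = -⨅ η : Set.Icc (0 : ℝ) 1, logPartition P1 P2 η := by
  unfold chernoff logPartition
  congr! 5 with η x
  rw [rpow_def_of_pos (hs1 x), rpow_def_of_pos (hs2 x), ← exp_add]
  ring_nf

theorem continuous_logPartition [Nonempty 𝒳] : Continuous (logPartition P1 P2) :=
  (continuous_finsetSum _ fun _ _ => by fun_prop).log fun _ =>
    (sum_pos (fun x _ => exp_pos _) univ_nonempty).ne'

theorem continuous_tiltedMeanLLR [Nonempty 𝒳] : Continuous (tiltedMeanLLR P1 P2) := by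
  have := continuous_logPartition P1 P2
  unfold tiltedMeanLLR tilted
  fun_prop

theorem logPartition_add_mul_le [Nonempty 𝒳] (η η' : ℝ) :
    logPartition P1 P2 η + (η' - η) * tiltedMeanLLR P1 P2 η ≤ logPartition P1 P2 η' := by
  have h := KL_tilted_eq P1 P2 (isPMF_tilted P1 P2 η).2 η η'
  have := KL_nonneg (isPMF_tilted P1 P2 η) (isPMF_tilted P1 P2 η') (fullSupport_tilted P1 P2 η')
  rw [KL_self] at h
  rw [tiltedMeanLLR]
  linarith

end Tilted

theorem IsMinOn.nonneg_of_continuous_subgradient {f T : ℝ → ℝ} {a b η₀ : ℝ}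
    (hmin : IsMinOn f (Set.Icc a b) η₀) (hT : Continuous T)
    (hsub : ∀ η η', f η + (η' - η) * T η ≤ f η') (ha : a ≤ η₀) (hb : η₀ < b) : 0 ≤ T η₀ := by
  refine ge_of_tendsto (hT.continuousWithinAt (s := Set.Ioi η₀)) ?_
  filter_upwards [Ioo_mem_nhdsGT hb] with η hη
  have hmin_η : f η₀ ≤ f η := hmin ⟨ha.trans hη.1.le, hη.2.le⟩
  nlinarith [hsub η η₀, hη.1]

theorem IsMinOn.nonpos_of_continuous_subgradient {f T : ℝ → ℝ} {a b η₀ : ℝ}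
    (hmin : IsMinOn f (Set.Icc a b) η₀) (hT : Continuous T)
    (hsub : ∀ η η', f η + (η' - η) * T η ≤ f η') (ha : a < η₀) (hb : η₀ ≤ b) : T η₀ ≤ 0 := by
  refine le_of_tendsto (hT.continuousWithinAt (s := Set.Iio η₀)) ?_
  filter_upwards [Ioo_mem_nhdsLT ha] with η hη
  have hmin_η : f η₀ ≤ f η := hmin ⟨hη.1.le, hη.2.le.trans hb⟩
  nlinarith [hsub η η₀, hη.2]

section Chernoff

variable {P1 P2 : 𝒳 → ℝ}

theorem KL_tilted (hP1 : IsPMF P1) (hP2 : IsPMF P2) (hs1 : FullSupport P1)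
    (hs2 : FullSupport P2) {V : 𝒳 → ℝ} (hV : ∑ x, V x = 1) (η : ℝ) :
    KL V (tilted P1 P2 η) = η * KL V P1 + (1 - η) * KL V P2 + logPartition P1 P2 η := by
  have h1 := KL_tilted_eq P1 P2 hV η 1
  have h0 := KL_tilted_eq P1 P2 hV η 0
  rw [tilted_one P2 hP1 hs1, logPartition_one P2 hP1 hs1] at h1
  rw [tilted_zero P1 hP2 hs2, logPartition_zero P1 hP2 hs2] at h0
  rw [h1, h0]
  ring

theorem neg_logPartition_le (hP1 : IsPMF P1) (hP2 : IsPMF P2) (hs1 : FullSupport P1)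
    (hs2 : FullSupport P2) {V : 𝒳 → ℝ} (hV : IsPMF V) (η : ℝ) :
    -logPartition P1 P2 η ≤ η * KL V P1 + (1 - η) * KL V P2 := by
  have := hV.nonempty
  have h := KL_nonneg hV (isPMF_tilted P1 P2 η) (fullSupport_tilted P1 P2 η)
  rw [KL_tilted hP1 hP2 hs1 hs2 hV.2] at h
  linarith

theorem KL_tilted_left_eq (hP1 : IsPMF P1) (hs1 : FullSupport P1) [Nonempty 𝒳] (η : ℝ) :
    KL (tilted P1 P2 η) P1 = (η - 1) * tiltedMeanLLR P1 P2 η - logPartition P1 P2 η := by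
  have h := KL_tilted_eq P1 P2 (isPMF_tilted P1 P2 η).2 η 1
  rw [tilted_one P2 hP1 hs1, logPartition_one P2 hP1 hs1] at h
  rw [h, KL_self, tiltedMeanLLR]
  ring

theorem KL_tilted_right_eq (hP2 : IsPMF P2) (hs2 : FullSupport P2) [Nonempty 𝒳] (η : ℝ) :
    KL (tilted P1 P2 η) P2 = η * tiltedMeanLLR P1 P2 η - logPartition P1 P2 η := by
  have h := KL_tilted_eq P1 P2 (isPMF_tilted P1 P2 η).2 η 0
  rw [tilted_zero P1 hP2 hs2, logPartition_zero P1 hP2 hs2] at h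
  rw [h, KL_self, tiltedMeanLLR]
  ring

theorem exists_isMinOn_logPartition_and_chernoff_eq [Nonempty 𝒳] (hs1 : FullSupport P1)
    (hs2 : FullSupport P2) :
    ∃ η₀ ∈ Set.Icc (0 : ℝ) 1, IsMinOn (logPartition P1 P2) (Set.Icc 0 1) η₀ ∧
      chernoff P1 P2 = -logPartition P1 P2 η₀ := by
  obtain ⟨η₀, hη₀, hmin⟩ := isCompact_Icc.exists_isMinOn (Set.nonempty_Icc.2 zero_le_one)
    (continuous_logPartition P1 P2).continuousOn
  exact ⟨η₀, hη₀, hmin, by rw [chernoff_eq_neg_iInf_logPartition hs1 hs2, hmin.iInf_eq hη₀]⟩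

theorem exists_isPMF_KL_le_chernoff (hP1 : IsPMF P1) (hP2 : IsPMF P2) (hs1 : FullSupport P1)
    (hs2 : FullSupport P2) :
    ∃ V, IsPMF V ∧ KL V P1 ≤ chernoff P1 P2 ∧ KL V P2 ≤ chernoff P1 P2 := by
  have := hP1.nonempty
  obtain ⟨η₀, hη₀, hmin, hC⟩ := exists_isMinOn_logPartition_and_chernoff_eq hs1 hs2
  have hT := continuous_tiltedMeanLLR P1 P2
  have hsub := logPartition_add_mul_le P1 P2
  refine ⟨tilted P1 P2 η₀, isPMF_tilted P1 P2 η₀, ?_, ?_⟩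
  · rw [KL_tilted_left_eq hP1 hs1, hC]
    rcases hη₀.2.eq_or_lt with h | h
    · simp [h]
    · nlinarith [IsMinOn.nonneg_of_continuous_subgradient hmin hT hsub hη₀.1 h]
  · rw [KL_tilted_right_eq hP2 hs2, hC]
    rcases hη₀.1.eq_or_lt with h | h
    · simp [← h]
    · nlinarith [IsMinOn.nonpos_of_continuous_subgradient hmin hT hsub h hη₀.2]

theorem le_KL_of_KL_le_of_le_chernoff (hP1 : IsPMF P1) (hP2 : IsPMF P2) (hs1 : FullSupport P1)
    (hs2 : FullSupport P2) {V : 𝒳 → ℝ} (hV : IsPMF V) {γ : ℝ} (hV2 : KL V P2 ≤ γ)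
    (hγ : γ ≤ chernoff P1 P2) : γ ≤ KL V P1 := by
  have := hV.nonempty
  obtain ⟨η₀, hη₀, -, hC⟩ := exists_isMinOn_logPartition_and_chernoff_eq hs1 hs2
  have hkey := neg_logPartition_le hP1 hP2 hs1 hs2 hV η₀
  rcases hη₀.1.eq_or_lt with h | h
  · rw [← h, logPartition_zero P1 hP2 hs2] at hC
    linarith [KL_nonneg hV hP1 hs1]
  · by_contra! hlt
    nlinarith [mul_le_mul_of_nonneg_left hV2 (sub_nonneg.2 hη₀.2)]

end Chernoff

variable [DecidableEq 𝒳]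

theorem max_bayesian_exponent_is_chernoff
    (P1 P2 : 𝒳 → ℝ) (hP1 : IsPMF P1) (hP2 : IsPMF P2)
    (hs1 : FullSupport P1) (hs2 : FullSupport P2) :
    {γ : ℝ | 0 ≤ γ ∧
        γ ≤ sInf {v : ℝ | ∃ V : 𝒳 → ℝ, IsPMF V ∧ KL V P2 ≤ γ ∧ v = KL V P1}} =
      Set.Icc 0 (chernoff P1 P2) := by
  ext γ
  refine and_congr_right fun _ => ⟨fun hinf => ?_, fun hγC => ?_⟩
  · obtain ⟨Q, hQ, hQ1, hQ2⟩ := exists_isPMF_KL_le_chernoff hP1 hP2 hs1 hs2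
    by_contra! hCγ
    have hbdd : BddBelow {v : ℝ | ∃ V : 𝒳 → ℝ, IsPMF V ∧ KL V P2 ≤ γ ∧ v = KL V P1} :=
      ⟨0, by rintro _ ⟨V, hV, -, rfl⟩; exact KL_nonneg hV hP1 hs1⟩
    have := csInf_le hbdd ⟨Q, hQ, hQ2.trans hCγ.le, rfl⟩
    linarith
  · refine le_csInf ⟨KL P2 P1, P2, hP2, by rwa [KL_self], rfl⟩ ?_
    rintro _ ⟨V, hV, hV2, rfl⟩
    exact le_KL_of_KL_le_of_le_chernoff hP1 hP2 hs1 hs2 hV hV2 hγC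

end SeqClass
end

section
/- Fix a finite alphabet 𝒳, an integer M ≥ 2, pairwise distinct probability mass functions P₁,…,P_M on 𝒳 with full support, and γ ∈ (0, min_{(i,j): i≠j} C(P_i,P_j)]. For each ordered pair (i,j) with i ≠ j, let θ*_{i(j),γ} > 0 solve GJS(P_j, P_i, θ) = γθ, and set θ_min = min_{(i,j): i≠j} θ*_{i(j),γ}. Then for every ordered pair (l,k) with l ≠ k one has GJS(P_l, P_k, θ_min) ≥ γ·θ_min, and min_{(l,k): l≠k} GJS(P_l, P_k, θ_min)/θ_min = γ. Hence Gutman's fixed-length multiclass test with training-to-test ratio α = θ_min has Bayesian error exponent exactly γ, equal to the achievable Bayesian error exponent of the rejection-free sequential test Φ^{(M)}_seq(γ). -/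
open Filter

namespace SeqClass

variable {𝒳 : Type*} [Fintype 𝒳] [DecidableEq 𝒳]

/-
`GJS(P,Q,t)` is the minimum over distributions `R` of `t D(P‖R) + D(Q‖R)`, attained at the
mixture: the excess is `(1+t) D(mix P Q t‖R) ≥ 0`. Hence `GJS(P,Q,t)/t`, being the minimum
over `R` of `D(P‖R) + D(Q‖R)/t`, is nonincreasing on `t > 0`. As `θmin ≤ θ*_{k(l)}`, this gives
`GJS(P_l,P_k,θmin)/θmin ≥ GJS(P_l,P_k,θ*_{k(l)})/θ*_{k(l)} = γ`, with equality for the pair at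
which `θmin` is attained.
-/

section Divergence

variable {α : Type*} {P Q R : α → ℝ}

lemma mix_pos (hP : ∀ x, 0 ≤ P x) (hQ : FullSupport Q) {t : ℝ} (ht : 0 ≤ t) :
    FullSupport (mix P Q t) :=
  fun x => div_pos (add_pos_of_nonneg_of_pos (mul_nonneg ht (hP x)) (hQ x)) (by linarith)

lemma sub_le_mul_log_div {q r : ℝ} (hq : 0 ≤ q) (hr : 0 < r) :
    q - r ≤ q * Real.log (q / r) := by
  rcases hq.eq_or_lt with rfl | hq
  · simpa using hr.le
  have h := Real.one_sub_inv_le_log_of_pos (div_pos hq hr)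
  rw [inv_div] at h
  calc q - r = q * (1 - r / q) := by field_simp
    _ ≤ q * Real.log (q / r) := mul_le_mul_of_nonneg_left h hq.le

variable [Fintype α]

lemma sum_mix_eq_one (hP : ∑ x, P x = 1) (hQ : ∑ x, Q x = 1) {t : ℝ} (ht : 1 + t ≠ 0) :
    ∑ x, mix P Q t x = 1 := by
  simp only [mix]
  rw [← Finset.sum_div, Finset.sum_add_distrib, ← Finset.mul_sum, hP, hQ, mul_one,
    add_comm, div_self ht]

lemma sum_sub_sum_le_KL (hQ : ∀ x, 0 ≤ Q x) (hR : FullSupport R) :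
    ∑ x, Q x - ∑ x, R x ≤ KL Q R := by
  rw [← Finset.sum_sub_distrib]
  exact Finset.sum_le_sum fun x _ => sub_le_mul_log_div (hQ x) (hR x)

lemma KL_nonneg_s8 (hQ : ∀ x, 0 ≤ Q x) (hR : FullSupport R) (hRQ : ∑ x, R x ≤ ∑ x, Q x) :
    0 ≤ KL Q R :=
  (sub_nonneg.2 hRQ).trans (sum_sub_sum_le_KL hQ hR)

lemma GJS_add_KL_mix (hP : FullSupport P) (hQ : FullSupport Q) (hR : FullSupport R)
    {t : ℝ} (ht : 0 ≤ t) :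
    GJS P Q t + (1 + t) * KL (mix P Q t) R = t * KL P R + KL Q R := by
  have hm := mix_pos (fun x => (hP x).le) hQ ht
  simp only [GJS, KL, Finset.mul_sum, ← Finset.sum_add_distrib]
  refine Finset.sum_congr rfl fun x _ => ?_
  have hmx : (1 + t) * mix P Q t x = t * P x + Q x := by
    simp only [mix]; field_simp
  rw [Real.log_div (hP x).ne' (hR x).ne', Real.log_div (hP x).ne' (hm x).ne',
    Real.log_div (hQ x).ne' (hR x).ne', Real.log_div (hQ x).ne' (hm x).ne',
    Real.log_div (hm x).ne' (hR x).ne']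
  linear_combination (Real.log (mix P Q t x) - Real.log (R x)) * hmx

lemma GJS_le_mul_KL_add_KL (hP : FullSupport P) (hQ : FullSupport Q) (hP1 : ∑ x, P x = 1)
    (hQ1 : ∑ x, Q x = 1) (hR : FullSupport R) (hR1 : ∑ x, R x = 1) {t : ℝ} (ht : 0 ≤ t) :
    GJS P Q t ≤ t * KL P R + KL Q R := by
  have hmix : 0 ≤ KL (mix P Q t) R :=
    KL_nonneg_s8 (fun x => (mix_pos (fun x => (hP x).le) hQ ht x).le) hR
      (by rw [hR1, sum_mix_eq_one hP1 hQ1 (by linarith)])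
  have := GJS_add_KL_mix hP hQ hR ht
  nlinarith

lemma GJS_div_antitoneOn (hP : FullSupport P) (hQ : FullSupport Q) (hP1 : ∑ x, P x = 1)
    (hQ1 : ∑ x, Q x = 1) : AntitoneOn (fun t => GJS P Q t / t) (Set.Ioi 0) := by
  intro s (hs : 0 < s) t (ht : 0 < t) hst
  set m := mix P Q s with hm_def
  have hm : FullSupport m := mix_pos (fun x => (hP x).le) hQ hs.le
  have hm1 : ∑ x, m x = 1 := sum_mix_eq_one hP1 hQ1 (by linarith)
  have hQm : 0 ≤ KL Q m := KL_nonneg_s8 (fun x => (hQ x).le) hm (by rw [hm1, hQ1])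
  calc GJS P Q t / t ≤ (t * KL P m + KL Q m) / t :=
        div_le_div_of_nonneg_right (GJS_le_mul_KL_add_KL hP hQ hP1 hQ1 hm hm1 ht.le) ht.le
    _ = KL P m + KL Q m / t := by field_simp
    _ ≤ KL P m + KL Q m / s := by gcongr
    _ = GJS P Q s / s := by rw [GJS, ← hm_def]; field_simp

end Divergence

theorem multiclass_sequential_matches_gutman_bayesian_general
    (M : ℕ) (hM : 2 ≤ M) (P : Fin M → 𝒳 → ℝ)
    (hP : ∀ i, IsPMF (P i)) (hs : ∀ i, FullSupport (P i))
    (γ : ℝ)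
    (θ : Fin M → Fin M → ℝ)
    (hθ : ∀ i j, i ≠ j → 0 < θ i j ∧ GJS (P j) (P i) (θ i j) = γ * θ i j)
    (θmin : ℝ)
    (hθmin : θmin = ⨅ p : {q : Fin M × Fin M // q.1 ≠ q.2}, θ p.1.1 p.1.2) :
    (∀ l k : Fin M, l ≠ k → γ * θmin ≤ GJS (P l) (P k) θmin) ∧
    (⨅ p : {q : Fin M × Fin M // q.1 ≠ q.2}, GJS (P p.1.1) (P p.1.2) θmin / θmin) = γ := by
  have : Nonempty {q : Fin M × Fin M // q.1 ≠ q.2} :=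
    ⟨⟨(⟨0, by omega⟩, ⟨1, by omega⟩), by simp [Fin.ext_iff]⟩⟩
  obtain ⟨⟨⟨i₀, j₀⟩, hij₀⟩, hθ₀⟩ := exists_eq_ciInf_of_finite
    (f := fun p : {q : Fin M × Fin M // q.1 ≠ q.2} => θ p.1.1 p.1.2)
  rw [← hθmin] at hθ₀
  have hθmin_le : ∀ p : {q : Fin M × Fin M // q.1 ≠ q.2}, θmin ≤ θ p.1.1 p.1.2 := fun p =>
    hθmin ▸ ciInf_le (Finite.bddBelow_range _) p
  have hθmin_pos : 0 < θmin := hθ₀ ▸ (hθ i₀ j₀ hij₀).1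
  have hratio : ∀ l k, l ≠ k → γ ≤ GJS (P l) (P k) θmin / θmin := by
    intro l k hlk
    obtain ⟨hpos, heq⟩ := hθ k l hlk.symm
    calc γ = GJS (P l) (P k) (θ k l) / θ k l := by
          rw [heq, mul_div_cancel_right₀ _ hpos.ne']
      _ ≤ GJS (P l) (P k) θmin / θmin :=
        GJS_div_antitoneOn (hs l) (hs k) (hP l).2 (hP k).2 hθmin_pos hpos
          (hθmin_le ⟨(k, l), hlk.symm⟩)
  refine ⟨fun l k hlk => (le_div_iff₀ hθmin_pos).1 (hratio l k hlk),
    le_antisymm ?_ (le_ciInf fun p => hratio _ _ p.2)⟩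
  have hattained : GJS (P j₀) (P i₀) θmin / θmin = γ := by
    rw [← hθ₀, (hθ i₀ j₀ hij₀).2, mul_div_cancel_right₀ _ (hθ i₀ j₀ hij₀).1.ne']
  exact (ciInf_le (Finite.bddBelow_range _) ⟨(j₀, i₀), hij₀.symm⟩).trans_eq hattained

theorem multiclass_sequential_matches_gutman_bayesian
    (M : ℕ) (hM : 2 ≤ M) (P : Fin M → 𝒳 → ℝ)
    (hP : ∀ i, IsPMF (P i)) (hs : ∀ i, FullSupport (P i))
    (hdist : ∀ i j, i ≠ j → P i ≠ P j)
    (γ : ℝ) (hγ0 : 0 < γ)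
    (hγC : γ ≤ ⨅ p : {q : Fin M × Fin M // q.1 ≠ q.2}, chernoff (P p.1.1) (P p.1.2))
    (θ : Fin M → Fin M → ℝ)
    (hθ : ∀ i j, i ≠ j → 0 < θ i j ∧ GJS (P j) (P i) (θ i j) = γ * θ i j)
    (θmin : ℝ)
    (hθmin : θmin = ⨅ p : {q : Fin M × Fin M // q.1 ≠ q.2}, θ p.1.1 p.1.2) :
    (∀ l k : Fin M, l ≠ k → γ * θmin ≤ GJS (P l) (P k) θmin) ∧
    (⨅ p : {q : Fin M × Fin M // q.1 ≠ q.2}, GJS (P p.1.1) (P p.1.2) θmin / θmin) = γ :=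
  multiclass_sequential_matches_gutman_bayesian_general M hM P hP hs γ θ hθ θmin hθmin

end SeqClass
end

section
/- Let 𝒳 be a finite alphabet and let P, Q ∈ 𝒫(𝒳) have full support. Then the function α ↦ GJS(P, Q, α) on [0,∞) is concave, its derivative at each α ≥ 0 equals D( P ‖ (αP+Q)/(1+α) ), and lim_{α→∞} GJS(P, Q, α) = D(Q‖P). -/
/-!
With `m = α P + Q`, the logarithms in `GJS(P, Q, α)` regroup into
`GJS(P, Q, α) = D(Q‖P) - ∑ₓ m log (m / ((1 + α) P))`.
Differentiating term by term gives `D(P‖P_α)`, the extra terms `(P - Q) / (1 + α)` summing to zero.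
Its own derivative `1 / (1 + α) - ∑ₓ P² / m` is nonpositive by Cauchy–Schwarz, because `∑ₓ m = 1 + α`;
hence concavity. As `α → ∞`, `m / ((1 + α) P) = 1 + (Q - P) / ((1 + α) P)`, so `x log (1 + t / x) → t`
makes each summand tend to `Q - P`, and these sum to zero.
-/

open Filter

namespace SeqClass

variable {𝒳 : Type*} [Fintype 𝒳] [DecidableEq 𝒳]

open Real Topology

/-- The summand `m log (m / ((1 + a) p))`, with `m = a p + q`, of `D(Q‖P) - GJS P Q a`. -/
noncomputable def gjsTerm (p q a : ℝ) : ℝ :=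
  (a * p + q) * (log (a * p + q) - log (1 + a) - log p)

lemma hasDerivAt_gjsTerm (p q : ℝ) {α : ℝ} (hden : 0 < 1 + α) (hnum : 0 < α * p + q) :
    HasDerivAt (gjsTerm p q)
      (p * (log (α * p + q) - log (1 + α) - log p) + (p - q) / (1 + α)) α := by
  have hlin : HasDerivAt (fun a : ℝ => a * p + q) p α := (hasDerivAt_mul_const p).add_const q
  have hlog : HasDerivAt (fun a : ℝ => log (1 + a)) (1 / (1 + α)) α := by
    simpa using ((hasDerivAt_id' α).const_add 1).log hden.ne'
  refine (hlin.fun_mul (((hlin.log hnum.ne').fun_sub hlog).sub_const (log p))).congr_deriv ?_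
  rw [mul_sub (α * p + q), mul_div_cancel₀ p hnum.ne']
  field_simp
  ring

lemma tendsto_gjsTerm_atTop {p : ℝ} (hp : 0 < p) (q : ℝ) :
    Tendsto (gjsTerm p q) atTop (𝓝 (q - p)) := by
  have hv : Tendsto (fun a : ℝ => (1 + a) * p) atTop atTop :=
    (tendsto_atTop_add_const_left _ 1 tendsto_id).atTop_mul_const hp
  have hratio : Tendsto (fun a : ℝ => 1 + (q - p) / ((1 + a) * p)) atTop (𝓝 1) := by
    simpa using tendsto_const_nhds.add (tendsto_const_nhds.div_atTop hv)
  have hm : Tendsto (fun a : ℝ => a * p + q) atTop atTop :=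
    tendsto_atTop_add_const_right _ q (tendsto_id.atTop_mul_const hp)
  have hlim := hratio.mul ((tendsto_mul_log_one_add_div_atTop (q - p)).comp hv)
  rw [one_mul] at hlim
  refine hlim.congr' ?_
  filter_upwards [eventually_gt_atTop 0, hm.eventually_gt_atTop 0] with a ha hma
  have hva : 0 < (1 + a) * p := by positivity
  have hdiv : 1 + (q - p) / ((1 + a) * p) = (a * p + q) / ((1 + a) * p) := by
    field_simp
    ring
  rw [Function.comp_apply, hdiv, log_div hma.ne' hva.ne', log_mul (by positivity) hp.ne', gjsTerm]
  field_simp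
  ring

section

omit [DecidableEq 𝒳]

variable {P Q : 𝒳 → ℝ}

omit [Fintype 𝒳] in
lemma mix_num_pos (hsP : FullSupport P) (hsQ : FullSupport Q) {α : ℝ} (hα : 0 ≤ α) (x : 𝒳) :
    0 < α * P x + Q x :=
  add_pos_of_nonneg_of_pos (mul_nonneg hα (hsP x).le) (hsQ x)

lemma eventually_mix_num_pos (hsP : FullSupport P) (hsQ : FullSupport Q) {α : ℝ} (hα : 0 ≤ α) :
    ∀ᶠ a in 𝓝 α, 0 < 1 + a ∧ ∀ x, 0 < a * P x + Q x := by
  refine (Tendsto.eventually_const_lt (u := 0) (v := 1 + α) (by linarith) ?_).and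
    (eventually_all.2 fun x => Tendsto.eventually_const_lt (mix_num_pos hsP hsQ hα x) ?_)
  all_goals exact Continuous.tendsto (by fun_prop) α

lemma GJS_eq_KL_sub_sum_gjsTerm (hsP : FullSupport P) (hsQ : FullSupport Q) {α : ℝ}
    (hden : 0 < 1 + α) (hnum : ∀ x, 0 < α * P x + Q x) :
    GJS P Q α = KL Q P - ∑ x, gjsTerm (P x) (Q x) α := by
  simp only [GJS, KL, mix, gjsTerm, Finset.mul_sum, ← Finset.sum_add_distrib,
    ← Finset.sum_sub_distrib]
  refine Finset.sum_congr rfl fun x _ => ?_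
  have hmix : 0 < (α * P x + Q x) / (1 + α) := div_pos (hnum x) hden
  rw [log_div (hsP x).ne' hmix.ne', log_div (hsQ x).ne' hmix.ne', log_div (hsQ x).ne' (hsP x).ne',
    log_div (hnum x).ne' hden.ne']
  ring

lemma KL_mix_eq (hsP : FullSupport P) {α : ℝ} (hden : 0 < 1 + α) (hnum : ∀ x, 0 < α * P x + Q x) :
    KL P (mix P Q α) = ∑ x, P x * (log (P x) - log (α * P x + Q x) + log (1 + α)) := by
  refine Finset.sum_congr rfl fun x _ => ?_
  rw [mix, log_div (hsP x).ne' (div_pos (hnum x) hden).ne', log_div (hnum x).ne' hden.ne']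
  ring

lemma hasDerivAt_GJS (hP : IsPMF P) (hQ : IsPMF Q) (hsP : FullSupport P) (hsQ : FullSupport Q)
    {α : ℝ} (hα : 0 ≤ α) : HasDerivAt (fun a => GJS P Q a) (KL P (mix P Q α)) α := by
  obtain ⟨hden, hnum⟩ := (eventually_mix_num_pos hsP hsQ hα).self_of_nhds
  have hsum := HasDerivAt.fun_sum fun x (_ : x ∈ Finset.univ) =>
    hasDerivAt_gjsTerm (P x) (Q x) hden (hnum x)
  have hval : ∑ x, (P x * (log (α * P x + Q x) - log (1 + α) - log (P x)) +
      (P x - Q x) / (1 + α)) = -KL P (mix P Q α) := by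
    rw [Finset.sum_add_distrib, ← Finset.sum_div, Finset.sum_sub_distrib, hP.2, hQ.2, sub_self,
      zero_div, add_zero, KL_mix_eq hsP hden hnum, ← Finset.sum_neg_distrib]
    exact Finset.sum_congr rfl fun x _ => by ring
  rw [hval] at hsum
  have hGJS := hsum.const_sub (KL Q P)
  rw [neg_neg] at hGJS
  refine hGJS.congr_of_eventuallyEq ?_
  filter_upwards [eventually_mix_num_pos hsP hsQ hα] with a ha
  exact GJS_eq_KL_sub_sum_gjsTerm hsP hsQ ha.1 ha.2

lemma hasDerivAt_KL_mix (hP : IsPMF P) (hsP : FullSupport P) (hsQ : FullSupport Q) {α : ℝ}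
    (hα : 0 ≤ α) : HasDerivAt (fun a => KL P (mix P Q a))
      (1 / (1 + α) - ∑ x, P x ^ 2 / (α * P x + Q x)) α := by
  obtain ⟨hden, hnum⟩ := (eventually_mix_num_pos hsP hsQ hα).self_of_nhds
  have hterm (x : 𝒳) : HasDerivAt (fun a => P x * (log (P x) - log (a * P x + Q x) + log (1 + a)))
      (P x / (1 + α) - P x ^ 2 / (α * P x + Q x)) α := by
    have hlog := ((hasDerivAt_mul_const (P x)).add_const (Q x)).log (hnum x).ne'
    refine ((((hasDerivAt_const α (log (P x))).fun_sub hlog).fun_add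
      (((hasDerivAt_id' α).const_add 1).log hden.ne')).const_mul (P x)).congr_deriv ?_
    ring
  have hsum := HasDerivAt.fun_sum fun x (_ : x ∈ Finset.univ) => hterm x
  rw [Finset.sum_sub_distrib, ← Finset.sum_div, hP.2] at hsum
  refine hsum.congr_of_eventuallyEq ?_
  filter_upwards [eventually_mix_num_pos hsP hsQ hα] with a ha
  exact KL_mix_eq hsP ha.1 ha.2

/-- Cauchy–Schwarz against the weights `α P + Q`, whose total mass is `1 + α`. -/
lemma one_div_one_add_le_sum_sq_div (hP : IsPMF P) (hQ : IsPMF Q) {α : ℝ}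
    (hnum : ∀ x, 0 < α * P x + Q x) : 1 / (1 + α) ≤ ∑ x, P x ^ 2 / (α * P x + Q x) := by
  have hcs := Finset.sq_sum_div_le_sum_sq_div Finset.univ P fun x _ => hnum x
  rwa [hP.2, Finset.sum_add_distrib, ← Finset.mul_sum, hP.2, hQ.2, one_pow, mul_one,
    add_comm α] at hcs

lemma concaveOn_GJS (hP : IsPMF P) (hQ : IsPMF Q) (hsP : FullSupport P) (hsQ : FullSupport Q) :
    ConcaveOn ℝ (Set.Ici 0) (fun α => GJS P Q α) := by
  refine concaveOn_of_hasDerivWithinAt2_nonpos (convex_Ici 0)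
    (f' := fun α => KL P (mix P Q α)) (f'' := fun α => 1 / (1 + α) - ∑ x, P x ^ 2 / (α * P x + Q x))
    (fun α hα => (hasDerivAt_GJS hP hQ hsP hsQ hα).continuousAt.continuousWithinAt) ?_ ?_ ?_
    <;> rw [interior_Ici] <;> intro α hα
  · exact (hasDerivAt_GJS hP hQ hsP hsQ (le_of_lt hα)).hasDerivWithinAt
  · exact (hasDerivAt_KL_mix hP hsP hsQ (le_of_lt hα)).hasDerivWithinAt
  · exact sub_nonpos.2 (one_div_one_add_le_sum_sq_div hP hQ (mix_num_pos hsP hsQ (le_of_lt hα)))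

lemma tendsto_GJS_atTop (hP : IsPMF P) (hQ : IsPMF Q) (hsP : FullSupport P)
    (hsQ : FullSupport Q) : Tendsto (fun α => GJS P Q α) atTop (𝓝 (KL Q P)) := by
  have hsum : Tendsto (fun α => ∑ x, gjsTerm (P x) (Q x) α) atTop (𝓝 0) := by
    have := tendsto_finsetSum Finset.univ fun x _ => tendsto_gjsTerm_atTop (hsP x) (Q x)
    rwa [Finset.sum_sub_distrib, hP.2, hQ.2, sub_self] at this
  have hlim := tendsto_const_nhds (x := KL Q P) |>.sub hsum
  rw [sub_zero] at hlim
  refine hlim.congr' ?_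
  filter_upwards [eventually_ge_atTop 0] with α hα
  exact (GJS_eq_KL_sub_sum_gjsTerm hsP hsQ (by linarith) (mix_num_pos hsP hsQ hα)).symm

end

theorem gjs_concave_deriv_and_limit
    (P Q : 𝒳 → ℝ) (hP : IsPMF P) (hQ : IsPMF Q)
    (hsP : FullSupport P) (hsQ : FullSupport Q) :
    ConcaveOn ℝ (Set.Ici (0 : ℝ)) (fun α => GJS P Q α) ∧
    (∀ α : ℝ, 0 ≤ α → HasDerivAt (fun a : ℝ => GJS P Q a) (KL P (mix P Q α)) α) ∧
    Filter.Tendsto (fun α : ℝ => GJS P Q α) Filter.atTop (nhds (KL Q P)) :=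
  ⟨concaveOn_GJS hP hQ hsP hsQ, fun _ hα => hasDerivAt_GJS hP hQ hsP hsQ hα,
    tendsto_GJS_atTop hP hQ hsP hsQ⟩

end SeqClass
end

section
/- Let 𝒳 be a finite alphabet, P ∈ 𝒫(𝒳), and let X^N ∈ 𝒳^N and Y^n ∈ 𝒳^n be independent sequences each drawn i.i.d. from P. Then for every γ > 0, the probability that n·GJS(T_{X^N}, T_{Y^n}, N/n) ≥ γN is at most exp(−γN)·(n+N+1)^{|𝒳|}. -/
open Filter

namespace SeqClass

variable {𝒳 : Type*} [Fintype 𝒳] [DecidableEq 𝒳]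

/-!
Let `j`, `l` be the letter counts of `x`, `y` and `m = j + l` those of the pooled sample of size
`M = N + n`. With `L_k(c) = ∏ₐ (cₐ / k) ^ cₐ` the maximised likelihood of a sample with counts `c`,
one has `exp (n · GJS) = L_N(j) L_n(l) / L_M(m)`, so on the event
`P^N(x) P^n(y) = ∏ₐ Pₐ ^ mₐ ≤ exp (-γN) · ∏ₐ Pₐ ^ mₐ · L_N(j) L_n(l) / L_M(m)`.
Summing over type classes, whose sizes are multinomial coefficients `|T_c|`, the key identity is
`|T_j| |T_l| L_N(j) L_n(l) · b(N, n) = |T_m| L_M(m) ∏ₐ b(jₐ, lₐ)`, where `b(i, k)` is the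
binomial probability of `i` successes in `i + k` trials at parameter `i / (i + k)`. Since `b ≤ 1`
and, `N` being the mode, `b(N, n) ≥ 1 / (M + 1)`, each term is at most `(M + 1) |T_m| ∏ₐ Pₐ ^ mₐ`.
For fixed `j` the map `l ↦ j + l` is injective, so the sum over `l` is at most
`∑ₘ |T_m| ∏ₐ Pₐ ^ mₐ = 1`, and there are at most `(N + 1) ^ (|𝒳| - 1)` types `j`.
-/

open Finset
open scoped Nat

section TypeClasses

variable {α ι : Type*} [Fintype α] [Fintype ι]

def counts [DecidableEq α] (x : ι → α) (a : α) : ℕ := #{i | x i = a}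

lemma prod_comp_eq_prod_pow_counts {M : Type*} [CommMonoid M] [DecidableEq α] (f : α → M)
    (x : ι → α) : ∏ i, f (x i) = ∏ a, f a ^ counts x a := by
  rw [← prod_fiberwise univ x]
  refine prod_congr rfl fun a _ => ?_
  rw [prod_congr rfl fun i hi => congrArg f (mem_filter.mp hi).2, prod_const]
  rfl

lemma sum_counts [DecidableEq α] (x : ι → α) : ∑ a, counts x a = Fintype.card ι := by
  simp only [counts]
  rw [← card_eq_sum_card_fiberwise (fun i _ => mem_univ (x i)), card_univ]

lemma counts_mem_piAntidiag [DecidableEq α] (x : ι → α) :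
    counts x ∈ piAntidiag univ (Fintype.card ι) := by
  simp [sum_counts]

open MvPolynomial in
/-- Compare coefficients in `(∑ₐ Xₐ) ^ |ι| = ∑ₓ ∏ᵢ X_{x i}` with the multinomial theorem. -/
lemma card_counts_eq [DecidableEq α] [DecidableEq ι] {c : α → ℕ}
    (hc : c ∈ piAntidiag univ (Fintype.card ι)) :
    #{x : ι → α | counts x = c} = Nat.multinomial univ c := by
  let e := Finsupp.equivFunOnFinite (α := α) (M := ℕ)
  have hmonomial : ∀ d : α → ℕ, ∏ a, (X a : MvPolynomial α ℕ) ^ d a = monomial (e.symm d) 1 := by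
    intro d
    rw [monomial_eq, C_1, one_mul, Finsupp.prod_fintype _ _ fun _ => pow_zero _]
    rfl
  have hexpand : ∑ x : ι → α, monomial (e.symm (counts x)) (1 : ℕ) =
      ∑ d ∈ piAntidiag univ (Fintype.card ι), monomial (e.symm d) (Nat.multinomial univ d) := by
    have h := sum_pow_eq_sum_piAntidiag (univ : Finset α) (fun a => (X a : MvPolynomial α ℕ))
      (Fintype.card ι)
    rw [← card_univ, ← prod_const, prod_univ_sum, Fintype.piFinset_univ] at h
    simp only [prod_comp_eq_prod_pow_counts, hmonomial] at h
    rw [h]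
    refine sum_congr rfl fun d _ => ?_
    rw [← map_natCast C, C_mul_monomial, mul_one, Nat.cast_id]
  have := congrArg (coeff (e.symm c)) hexpand
  simp only [coeff_sum, coeff_monomial, e.symm.injective.eq_iff] at this
  simpa [sum_boole, hc] using this

lemma sum_comp_counts {M : Type*} [AddCommMonoid M] [DecidableEq α] [DecidableEq ι]
    (F : (α → ℕ) → M) :
    ∑ x : ι → α, F (counts x) =
      ∑ c ∈ piAntidiag univ (Fintype.card ι), Nat.multinomial univ c • F c := by
  rw [← sum_fiberwise_of_maps_to fun x _ => counts_mem_piAntidiag x]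
  refine sum_congr rfl fun c hc => ?_
  rw [sum_congr rfl fun x hx => congrArg F (mem_filter.mp hx).2, sum_const, card_counts_eq hc]

lemma sum_sum_comp_counts {κ M : Type*} [Fintype κ] [AddCommMonoid M] [DecidableEq α]
    [DecidableEq ι] [DecidableEq κ] (F : (α → ℕ) → (α → ℕ) → M) :
    ∑ x : ι → α, ∑ y : κ → α, F (counts x) (counts y) =
      ∑ j ∈ piAntidiag univ (Fintype.card ι), ∑ l ∈ piAntidiag univ (Fintype.card κ),
        Nat.multinomial univ j • Nat.multinomial univ l • F j l :=
  (sum_comp_counts fun j => ∑ y : κ → α, F j (counts y)).trans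
    (sum_congr rfl fun j _ => by rw [sum_comp_counts, smul_sum])

lemma card_piAntidiag_le [DecidableEq α] [Nonempty α] (N : ℕ) :
    #(piAntidiag (univ : Finset α) N) ≤ (N + 1) ^ (Fintype.card α - 1) := by
  obtain ⟨a₀⟩ := ‹Nonempty α›
  have hsplit : ∀ k ∈ piAntidiag univ N, k a₀ + ∑ b ∈ univ.erase a₀, k b = N := fun k hk => by
    rw [add_sum_erase _ _ (mem_univ _)]; exact (mem_piAntidiag.mp hk).1
  have hinj : Set.InjOn (fun (j : α → ℕ) (b : {b // b ≠ a₀}) => j b)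
      (piAntidiag (univ : Finset α) N : Set (α → ℕ)) := by
    intro j hj j' hj' h
    have hoff : ∀ b, b ≠ a₀ → j b = j' b := fun b hb => congrFun h ⟨b, hb⟩
    have hrest : ∑ b ∈ univ.erase a₀, j b = ∑ b ∈ univ.erase a₀, j' b :=
      sum_congr rfl fun b hb => hoff b (ne_of_mem_erase hb)
    have := hsplit j hj
    have := hsplit j' hj'
    funext b
    by_cases hb : b = a₀
    · rw [hb]; omega
    · exact hoff b hb
  calc #(piAntidiag univ N)
      ≤ #(Fintype.piFinset fun _ : {b // b ≠ a₀} => range (N + 1)) := by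
        refine card_le_card_of_injOn _ (fun j hj => ?_) hinj
        simp only [mem_coe, Fintype.mem_piFinset, mem_range]
        exact fun b => Nat.lt_succ_of_le ((single_le_sum (fun b _ => Nat.zero_le (j b))
          (mem_univ (b : α))).trans_eq (mem_piAntidiag.mp hj).1)
    _ = (N + 1) ^ (Fintype.card α - 1) := by simp

lemma sum_sum_comp_add_le [DecidableEq α] (s : Finset α) (N n : ℕ) (G : (α → ℕ) → ℝ)
    (hG : ∀ m ∈ piAntidiag s (N + n), 0 ≤ G m) :
    ∑ j ∈ piAntidiag s N, ∑ l ∈ piAntidiag s n, G (j + l) ≤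
      #(piAntidiag s N) * ∑ m ∈ piAntidiag s (N + n), G m := by
  rw [← nsmul_eq_mul, ← sum_const]
  refine sum_le_sum fun j hj => ?_
  rw [← sum_image (g := (j + ·)) fun l _ l' _ h => add_left_cancel h]
  refine sum_le_sum_of_subset_of_nonneg (fun m hm => ?_) fun m hm _ => hG m hm
  obtain ⟨l, hl, rfl⟩ := mem_image.mp hm
  simp only [mem_piAntidiag] at hj hl ⊢
  refine ⟨by simp [sum_add_distrib, hj.1, hl.1], fun a ha => ?_⟩
  by_contra h
  have hja : j a = 0 := by_contra fun h' => h (hj.2 a h')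
  have hla : l a = 0 := by_contra fun h' => h (hl.2 a h')
  simp [hja, hla] at ha

end TypeClasses

section MaxLikelihood

variable {α : Type*} [Fintype α]

noncomputable def maxLik (c : α → ℕ) (m : ℕ) : ℝ := ∏ a, ((c a : ℝ) / m) ^ c a

lemma maxLik_pos {c : α → ℕ} {m : ℕ} (hc : ∑ a, c a = m) : 0 < maxLik c m := by
  refine prod_pos fun a _ => ?_
  rcases Nat.eq_zero_or_pos (c a) with h | h
  · simp [h]
  · have : c a ≤ m := hc ▸ single_le_sum (fun _ _ => Nat.zero_le _) (mem_univ a)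
    have : (0 : ℝ) < m := by exact_mod_cast h.trans_le this
    positivity

lemma maxLik_mul_pow {c : α → ℕ} {m : ℕ} (hc : ∑ a, c a = m) :
    maxLik c m * (m : ℝ) ^ m = ∏ a, (c a : ℝ) ^ c a := by
  rcases Nat.eq_zero_or_pos m with rfl | hm
  · have : ∀ a, c a = 0 := fun a => (sum_eq_zero_iff.mp hc) a (mem_univ a)
    simp [maxLik, this]
  rw [maxLik, ← hc, ← prod_pow_eq_pow_sum, ← prod_mul_distrib]
  refine prod_congr rfl fun a _ => ?_
  rw [← mul_pow, div_mul_cancel₀ _ (by rw [hc]; positivity)]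

lemma exp_mul_KL_mul_prod_pow (c : α → ℕ) {m : ℕ} (hm : 0 < m) {Q : α → ℝ}
    (hQ : ∀ a, c a ≠ 0 → 0 < Q a) :
    Real.exp (m * KL (fun a => (c a : ℝ) / m) Q) * ∏ a, Q a ^ c a = maxLik c m := by
  have hKL : m * KL (fun a => (c a : ℝ) / m) Q = ∑ a, c a * Real.log (c a / m / Q a) := by
    rw [KL, mul_sum]
    exact sum_congr rfl fun a _ => by field_simp
  rw [hKL, Real.exp_sum, ← prod_mul_distrib, maxLik]
  refine prod_congr rfl fun a _ => ?_
  rcases eq_or_ne (c a) 0 with h | h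
  · simp [h]
  have hQa := hQ a h
  have hpos : 0 < (c a : ℝ) / m / Q a := by
    have : (0 : ℝ) < c a := by exact_mod_cast Nat.pos_of_ne_zero h
    positivity
  rw [Real.exp_nat_mul, Real.exp_log hpos, div_pow, div_mul_cancel₀ _ (by positivity)]

noncomputable def twoSampleLikRatio (j l : α → ℕ) (N n : ℕ) : ℝ :=
  maxLik j N * maxLik l n / maxLik (j + l) (N + n)

/-- The mixture `P_{N/n}` of the two empirical distributions is the pooled one. -/
lemma exp_mul_GJS_mul_maxLik {N n : ℕ} (hN : 0 < N) (hn : 0 < n) (j l : α → ℕ) :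
    Real.exp (n * GJS (fun a => (j a : ℝ) / N) (fun a => (l a : ℝ) / n) ((N : ℝ) / n)) *
      maxLik (j + l) (N + n) = maxLik j N * maxLik l n := by
  set Q : α → ℝ := fun a => ((j + l) a : ℝ) / (N + n : ℕ)
  have hmix : mix (fun a => (j a : ℝ) / N) (fun a => (l a : ℝ) / n) ((N : ℝ) / n) = Q := by
    funext a
    simp only [mix, Q, Pi.add_apply]
    push_cast
    field_simp
    ring
  have hQj : ∀ a, j a ≠ 0 → 0 < Q a := fun a h => by
    have : 0 < j a := Nat.pos_of_ne_zero h
    simp only [Q, Pi.add_apply]; positivity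
  have hQl : ∀ a, l a ≠ 0 → 0 < Q a := fun a h => by
    have : 0 < l a := Nat.pos_of_ne_zero h
    simp only [Q, Pi.add_apply]; positivity
  have hsplit : maxLik (j + l) (N + n) = (∏ a, Q a ^ j a) * ∏ a, Q a ^ l a := by
    rw [maxLik, ← prod_mul_distrib]
    exact prod_congr rfl fun a _ => by rw [← pow_add]; rfl
  have hGJS : (n : ℝ) * GJS (fun a => (j a : ℝ) / N) (fun a => (l a : ℝ) / n) ((N : ℝ) / n) =
      N * KL (fun a => (j a : ℝ) / N) Q + n * KL (fun a => (l a : ℝ) / n) Q := by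
    rw [GJS, hmix]; field_simp
  rw [hGJS, Real.exp_add, hsplit, ← exp_mul_KL_mul_prod_pow j hN hQj,
    ← exp_mul_KL_mul_prod_pow l hn hQl]
  ring

end MaxLikelihood

section Binomial

noncomputable def binomialTerm (p q : ℝ) (M i : ℕ) : ℝ := p ^ i * q ^ (M - i) * M.choose i

lemma binomialTerm_nonneg {p q : ℝ} (hp : 0 ≤ p) (hq : 0 ≤ q) (M i : ℕ) :
    0 ≤ binomialTerm p q M i := by
  unfold binomialTerm; positivity

lemma binomialTerm_succ_mul (p q : ℝ) {M i : ℕ} (hi : i < M) :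
    binomialTerm p q M (i + 1) * ((i + 1) * q) = binomialTerm p q M i * ((M - i : ℕ) * p) := by
  have hch : (M.choose (i + 1) : ℝ) * (i + 1) = M.choose i * (M - i : ℕ) := by
    exact_mod_cast Nat.choose_succ_right_eq M i
  obtain ⟨r, hr⟩ : ∃ r, M - i = r + 1 := ⟨M - i - 1, by omega⟩
  rw [hr] at hch
  rw [binomialTerm, binomialTerm, show M - (i + 1) = r by omega, hr, pow_succ, pow_succ]
  linear_combination p ^ i * p * q ^ r * q * hch

lemma sum_binomialTerm (p q : ℝ) (M : ℕ) :
    ∑ i ∈ range (M + 1), binomialTerm p q M i = (p + q) ^ M :=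
  (add_pow p q M).symm

lemma binomialTerm_le_of_mode {p q : ℝ} (hp : 0 ≤ p) (hq : 0 < q) {M N : ℕ} (hN : N ≤ M)
    (hup : ∀ i < N, (i + 1) * q ≤ (M - i : ℕ) * p)
    (hdown : ∀ i, N ≤ i → i < M → (M - i : ℕ) * p ≤ (i + 1) * q) {i : ℕ} (hi : i ≤ M) :
    binomialTerm p q M i ≤ binomialTerm p q M N := by
  have hpos : ∀ i : ℕ, 0 < ((i : ℝ) + 1) * q := fun i => by positivity
  have hnonneg := binomialTerm_nonneg hp hq.le M
  rcases le_total i N with hiN | hNi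
  · refine Nat.decreasingInduction (fun k hk ih => le_trans ?_ ih) le_rfl hiN
    refine le_of_mul_le_mul_right ?_ (hpos k)
    rw [binomialTerm_succ_mul p q (hk.trans_le hN)]
    exact mul_le_mul_of_nonneg_left (hup k hk) (hnonneg k)
  · induction i, hNi using Nat.le_induction with
    | base => exact le_rfl
    | succ k hk ih =>
      refine le_trans (le_of_mul_le_mul_right ?_ (hpos k)) (ih (by omega))
      rw [binomialTerm_succ_mul p q (by omega)]
      exact mul_le_mul_of_nonneg_left (hdown k hk (by omega)) (hnonneg k)

noncomputable def binomialMaxLik (i k : ℕ) : ℝ :=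
  binomialTerm ((i : ℝ) / (i + k)) ((k : ℝ) / (i + k)) (i + k) i

lemma binomialMaxLik_le_one (i k : ℕ) : binomialMaxLik i k ≤ 1 := by
  have hsum : ((i : ℝ) / (i + k) + k / (i + k)) ^ (i + k) = 1 := by
    rcases Nat.eq_zero_or_pos (i + k) with h | h
    · rw [h, pow_zero]
    · rw [← add_div, div_self (by exact_mod_cast h.ne'), one_pow]
  calc binomialMaxLik i k
      ≤ ∑ m ∈ range (i + k + 1), binomialTerm ((i : ℝ) / (i + k)) ((k : ℝ) / (i + k)) (i + k) m :=
        single_le_sum (fun m _ => binomialTerm_nonneg (by positivity) (by positivity) _ m)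
          (mem_range.mpr (by omega))
    _ = 1 := by rw [sum_binomialTerm, hsum]

/-- `N` is the mode of this binomial distribution, so its mass there is at least the average
`1 / (N + n + 1)`. -/
lemma one_le_mul_binomialMaxLik (N : ℕ) {n : ℕ} (hn : 0 < n) :
    1 ≤ (N + n + 1) * binomialMaxLik N n := by
  set M := N + n with hM
  have hMpos : (0 : ℝ) < M := by positivity
  have hcompare : ∀ {a b c d : ℕ}, a * b ≤ c * d → (a : ℝ) * (b / M) ≤ c * (d / M) := by
    intro a b c d h
    rw [mul_div_assoc', mul_div_assoc']
    exact div_le_div_of_nonneg_right (by exact_mod_cast h) hMpos.le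
  have hmode : ∀ i ∈ range (M + 1),
      binomialTerm (N / M) (n / M) M i ≤ binomialTerm (N / M) (n / M) M N := by
    intro i hi
    refine binomialTerm_le_of_mode (by positivity) (by positivity) (by omega)
      (fun k hk => ?_) (fun k hk hkM => ?_) (by simpa [Nat.lt_succ_iff] using hi)
    · exact_mod_cast hcompare
        ((Nat.mul_le_mul hk (by omega : n ≤ M - k)).trans_eq (Nat.mul_comm _ _))
    · exact_mod_cast hcompare
        ((Nat.mul_le_mul (by omega : M - k ≤ n) (by omega : N ≤ k + 1)).trans_eq (Nat.mul_comm _ _))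
  calc (1 : ℝ) = ∑ i ∈ range (M + 1), binomialTerm (N / M) (n / M) M i := by
        rw [sum_binomialTerm, ← add_div, ← Nat.cast_add, ← hM, div_self hMpos.ne', one_pow]
    _ ≤ #(range (M + 1)) • binomialTerm (N / M) (n / M) M N := sum_le_card_nsmul _ _ _ hmode
    _ = (N + n + 1) * binomialMaxLik N n := by
      rw [card_range, nsmul_eq_mul, binomialMaxLik, hM]; push_cast; ring

lemma binomialMaxLik_mul (i k : ℕ) :
    binomialMaxLik i k * ((i ! * k ! : ℕ) * ((i : ℝ) + k) ^ (i + k)) =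
      (i + k)! * ((i : ℝ) ^ i * (k : ℝ) ^ k) := by
  rcases Nat.eq_zero_or_pos (i + k) with h | h
  · obtain ⟨rfl, rfl⟩ : i = 0 ∧ k = 0 := by omega
    simp [binomialMaxLik, binomialTerm]
  have hik : (i : ℝ) + k ≠ 0 := by exact_mod_cast h.ne'
  have hch : ((i + k).choose i : ℝ) * (i ! * k ! : ℕ) = (i + k)! := by
    rw [← Nat.cast_mul, ← mul_assoc, Nat.choose_symm_add]
    exact_mod_cast Nat.add_choose_mul_factorial_mul_factorial i k
  rw [binomialMaxLik, binomialTerm, Nat.add_sub_cancel_left, div_pow, div_pow, pow_add, ← hch]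
  field_simp

end Binomial

section Splitting

variable {α : Type*} [Fintype α]

lemma multinomial_mul_prod_factorial (c : α → ℕ) :
    (Nat.multinomial univ c : ℝ) * ∏ a, ((c a)! : ℝ) = (∑ a, c a)! := by
  rw [mul_comm]; exact_mod_cast Nat.multinomial_spec univ c

/-- A Vandermonde-type identity: `|T_j| |T_l| / |T_{j+l}| = ∏ₐ C(jₐ + lₐ, jₐ) / C(N + n, N)`,
with the maximised likelihoods attached to both sides. -/
lemma multinomial_mul_maxLik_mul_binomialMaxLik {N n : ℕ} {j l : α → ℕ}
    (hj : ∑ a, j a = N) (hl : ∑ a, l a = n) :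
    Nat.multinomial univ j * Nat.multinomial univ l * (maxLik j N * maxLik l n) *
        binomialMaxLik N n =
      Nat.multinomial univ (j + l) * maxLik (j + l) (N + n) * ∏ a, binomialMaxLik (j a) (l a) := by
  have hjl : ∑ a, (j + l) a = N + n := by simp [sum_add_distrib, hj, hl]
  have hmj := multinomial_mul_prod_factorial j
  have hml := multinomial_mul_prod_factorial l
  have hmjl := multinomial_mul_prod_factorial (j + l)
  have hLj := maxLik_mul_pow hj
  have hLl := maxLik_mul_pow hl
  have hLjl := maxLik_mul_pow hjl
  have hbNn := binomialMaxLik_mul N n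
  have hbprod : (∏ a, binomialMaxLik (j a) (l a)) *
      ((∏ a, ((j a)! : ℝ)) * (∏ a, ((l a)! : ℝ)) * ∏ a, ((j + l) a : ℝ) ^ (j + l) a) =
      (∏ a, (((j + l) a)! : ℝ)) * ((∏ a, (j a : ℝ) ^ j a) * ∏ a, (l a : ℝ) ^ l a) := by
    simp only [← prod_mul_distrib, Pi.add_apply]
    refine prod_congr rfl fun a _ => ?_
    rw [← binomialMaxLik_mul]; push_cast; ring
  rw [hj] at hmj; rw [hl] at hml; rw [hjl] at hmjl
  simp only [Pi.add_apply] at hmjl hLjl hbprod ⊢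
  push_cast at hmjl hLjl hbNn hbprod ⊢
  have hpow : ∀ m : ℕ, (0 : ℝ) < (m : ℝ) ^ m := fun m => by exact_mod_cast Nat.pow_self_pos
  have hA : (0 : ℝ) < ∏ a, ((j a)! : ℝ) := prod_pos fun a _ => by positivity
  have hB : (0 : ℝ) < ∏ a, ((l a)! : ℝ) := prod_pos fun a _ => by positivity
  have hC : (0 : ℝ) < ∏ a, ((j a + l a)! : ℝ) := prod_pos fun a _ => by positivity
  have hW : (0 : ℝ) < ∏ a, ((j a : ℝ) + l a) ^ (j a + l a) :=
    prod_pos fun a _ => by exact_mod_cast hpow (j a + l a)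
  have hNn : (0 : ℝ) < ((N : ℝ) + n) ^ (N + n) := by exact_mod_cast hpow (N + n)
  rw [eq_div_of_mul_eq hA.ne' hmj, eq_div_of_mul_eq hB.ne' hml, eq_div_of_mul_eq hC.ne' hmjl,
    eq_div_of_mul_eq (hpow N).ne' hLj, eq_div_of_mul_eq (hpow n).ne' hLl,
    eq_div_of_mul_eq hNn.ne' hLjl, eq_div_of_mul_eq (mul_ne_zero (by positivity) hNn.ne') hbNn,
    eq_div_of_mul_eq (mul_pos (mul_pos hA hB) hW).ne' hbprod]
  field_simp

lemma multinomial_mul_multinomial_mul_twoSampleLikRatio_le {N n : ℕ} (hn : 0 < n)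
    {j l : α → ℕ} (hj : ∑ a, j a = N) (hl : ∑ a, l a = n) :
    Nat.multinomial univ j * Nat.multinomial univ l * twoSampleLikRatio j l N n ≤
      (N + n + 1) * Nat.multinomial univ (j + l) := by
  have hjl : ∑ a, (j + l) a = N + n := by simp [sum_add_distrib, hj, hl]
  have hprod : ∏ a, binomialMaxLik (j a) (l a) ≤ 1 :=
    prod_le_one (fun a _ => binomialTerm_nonneg (by positivity) (by positivity) _ _)
      fun a _ => binomialMaxLik_le_one _ _
  have hpooled : 0 ≤ (Nat.multinomial univ (j + l) : ℝ) * maxLik (j + l) (N + n) :=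
    mul_nonneg (by positivity) (maxLik_pos hjl).le
  rw [twoSampleLikRatio, ← mul_div_assoc, div_le_iff₀ (maxLik_pos hjl)]
  calc (Nat.multinomial univ j : ℝ) * Nat.multinomial univ l * (maxLik j N * maxLik l n)
      ≤ Nat.multinomial univ j * Nat.multinomial univ l * (maxLik j N * maxLik l n) *
          ((N + n + 1) * binomialMaxLik N n) :=
        le_mul_of_one_le_right (by positivity [(maxLik_pos hj).le, (maxLik_pos hl).le])
          (one_le_mul_binomialMaxLik N hn)
    _ = (N + n + 1) * (Nat.multinomial univ (j + l) * maxLik (j + l) (N + n) *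
          ∏ a, binomialMaxLik (j a) (l a)) := by
        rw [← multinomial_mul_maxLik_mul_binomialMaxLik hj hl]; ring
    _ ≤ (N + n + 1) * (Nat.multinomial univ (j + l) * maxLik (j + l) (N + n)) :=
        mul_le_mul_of_nonneg_left (mul_le_of_le_one_right hpooled hprod) (by positivity)
    _ = (N + n + 1) * Nat.multinomial univ (j + l) * maxLik (j + l) (N + n) := by ring

end Splitting

section TwoSample

variable {α : Type*} [Fintype α] [DecidableEq α]

lemma ite_le_exp_mul_twoSampleLikRatio {P : α → ℝ} (hP : ∀ a, 0 ≤ P a) {N n : ℕ} (hN : 0 < N)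
    (hn : 0 < n) (γ : ℝ) (x : Fin N → α) (y : Fin n → α) :
    (if γ * N ≤ (n : ℝ) * GJS (empDist x) (empDist y) ((N : ℝ) / n) then
        prodProb P x * prodProb P y else 0) ≤
      Real.exp (-γ * N) * ((∏ a, P a ^ (counts x a + counts y a)) *
        twoSampleLikRatio (counts x) (counts y) N n) := by
  have hpooled : ∑ a, (counts x + counts y) a = N + n := by
    simp [sum_add_distrib, sum_counts]
  have hratio : twoSampleLikRatio (counts x) (counts y) N n =
      Real.exp (n * GJS (empDist x) (empDist y) ((N : ℝ) / n)) := by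
    rw [twoSampleLikRatio, ← exp_mul_GJS_mul_maxLik hN hn,
      mul_div_cancel_right₀ _ (maxLik_pos hpooled).ne']
    rfl
  have hprob : prodProb P x * prodProb P y = ∏ a, P a ^ (counts x a + counts y a) := by
    simp only [prodProb, prod_comp_eq_prod_pow_counts, pow_add, prod_mul_distrib]
  have hnonneg : 0 ≤ ∏ a, P a ^ (counts x a + counts y a) :=
    prod_nonneg fun a _ => pow_nonneg (hP a) _
  rw [hratio]
  split_ifs with h
  · rw [hprob, mul_left_comm, ← Real.exp_add]
    exact le_mul_of_one_le_right hnonneg (Real.one_le_exp (by linarith))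
  · positivity

lemma sum_sum_multinomial_mul_twoSampleLikRatio_le [Nonempty α] {P : α → ℝ} (hP : IsPMF P)
    (N : ℕ) {n : ℕ} (hn : 0 < n) :
    ∑ j ∈ piAntidiag univ N, ∑ l ∈ piAntidiag univ n, Nat.multinomial univ j •
        Nat.multinomial univ l • ((∏ a, P a ^ (j a + l a)) * twoSampleLikRatio j l N n) ≤
      ((N : ℝ) + n + 1) ^ Fintype.card α := by
  set G : (α → ℕ) → ℝ := fun m => Nat.multinomial univ m * ∏ a, P a ^ m a
  have hterm : ∀ j ∈ piAntidiag univ N, ∀ l ∈ piAntidiag univ n,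
      Nat.multinomial univ j • Nat.multinomial univ l •
        ((∏ a, P a ^ (j a + l a)) * twoSampleLikRatio j l N n) ≤ (N + n + 1) * G (j + l) := by
    intro j hj l hl
    have hP' : 0 ≤ ∏ a, P a ^ (j a + l a) := prod_nonneg fun a _ => pow_nonneg (hP.1 a) _
    calc Nat.multinomial univ j • Nat.multinomial univ l •
          ((∏ a, P a ^ (j a + l a)) * twoSampleLikRatio j l N n)
        = Nat.multinomial univ j * Nat.multinomial univ l * twoSampleLikRatio j l N n *
            ∏ a, P a ^ (j a + l a) := by
          simp only [nsmul_eq_mul]; ring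
      _ ≤ (N + n + 1) * Nat.multinomial univ (j + l) * ∏ a, P a ^ (j a + l a) :=
          mul_le_mul_of_nonneg_right (multinomial_mul_multinomial_mul_twoSampleLikRatio_le hn
            (mem_piAntidiag.mp hj).1 (mem_piAntidiag.mp hl).1) hP'
      _ = (N + n + 1) * G (j + l) := by
          simp only [G, Pi.add_apply]; ring
  have hG : ∀ m ∈ piAntidiag univ (N + n), 0 ≤ G m := fun m _ =>
    mul_nonneg (by positivity) (prod_nonneg fun a _ => pow_nonneg (hP.1 a) _)
  have htotal : ∑ m ∈ piAntidiag univ (N + n), G m = 1 := by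
    rw [← sum_pow_eq_sum_piAntidiag, hP.2, one_pow]
  calc _ ≤ ∑ j ∈ piAntidiag univ N, ∑ l ∈ piAntidiag univ n, (N + n + 1) * G (j + l) :=
        sum_le_sum fun j hj => sum_le_sum fun l hl => hterm j hj l hl
    _ = (N + n + 1) * ∑ j ∈ piAntidiag univ N, ∑ l ∈ piAntidiag univ n, G (j + l) := by
        simp_rw [mul_sum]
    _ ≤ (N + n + 1) * (#(piAntidiag univ N) * ∑ m ∈ piAntidiag univ (N + n), G m) := by
        gcongr; exact sum_sum_comp_add_le univ N n G hG
    _ ≤ (N + n + 1) * ((N + n + 1) ^ (Fintype.card α - 1)) := by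
        rw [htotal, mul_one]
        gcongr
        calc (#(piAntidiag (univ : Finset α) N) : ℝ) ≤ ((N + 1) ^ (Fintype.card α - 1) : ℕ) := by
              exact_mod_cast card_piAntidiag_le N
          _ ≤ ((N : ℝ) + n + 1) ^ (Fintype.card α - 1) := by push_cast; gcongr; linarith
    _ = ((N : ℝ) + n + 1) ^ Fintype.card α := by
        rw [← pow_succ', Nat.sub_add_cancel Fintype.card_pos]

end TwoSample

theorem gjs_same_distribution_probability_bound_general
    (P : 𝒳 → ℝ) (hP : IsPMF P)
    (N n : ℕ) (hN : 0 < N) (hn : 0 < n) (γ : ℝ) :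
    (∑ x : Fin N → 𝒳, ∑ y : Fin n → 𝒳,
        if γ * N ≤ (n : ℝ) * GJS (empDist x) (empDist y) ((N : ℝ) / n) then
          prodProb P x * prodProb P y
        else 0) ≤
      Real.exp (-γ * N) * ((n : ℝ) + N + 1) ^ Fintype.card 𝒳 := by
  rcases isEmpty_or_nonempty 𝒳 with h𝒳 | h𝒳
  · have : IsEmpty (Fin N → 𝒳) := ⟨fun x => h𝒳.false (x ⟨0, hN⟩)⟩
    simp only [univ_eq_empty, sum_empty]
    positivity
  calc _ ≤ ∑ x : Fin N → 𝒳, ∑ y : Fin n → 𝒳, Real.exp (-γ * N) *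
          ((∏ a, P a ^ (counts x a + counts y a)) * twoSampleLikRatio (counts x) (counts y) N n) :=
        sum_le_sum fun x _ => sum_le_sum fun y _ =>
          ite_le_exp_mul_twoSampleLikRatio hP.1 hN hn γ x y
    _ = Real.exp (-γ * N) * ∑ j ∈ piAntidiag univ N, ∑ l ∈ piAntidiag univ n,
          Nat.multinomial univ j • Nat.multinomial univ l •
            ((∏ a, P a ^ (j a + l a)) * twoSampleLikRatio j l N n) := by
        rw [sum_sum_comp_counts (fun j l => Real.exp (-γ * N) *
          ((∏ a, P a ^ (j a + l a)) * twoSampleLikRatio j l N n))]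
        simp only [Fintype.card_fin, mul_sum, mul_smul_comm]
    _ ≤ Real.exp (-γ * N) * ((n : ℝ) + N + 1) ^ Fintype.card 𝒳 := by
        rw [add_comm (n : ℝ)]
        gcongr
        exact sum_sum_multinomial_mul_twoSampleLikRatio_le hP N hn

theorem gjs_same_distribution_probability_bound
    (P : 𝒳 → ℝ) (hP : IsPMF P)
    (N n : ℕ) (hN : 0 < N) (hn : 0 < n) (γ : ℝ) (hγ : 0 < γ) :
    (∑ x : Fin N → 𝒳, ∑ y : Fin n → 𝒳,
        if γ * N ≤ (n : ℝ) * GJS (empDist x) (empDist y) ((N : ℝ) / n) then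
          prodProb P x * prodProb P y
        else 0) ≤
      Real.exp (-γ * N) * ((n : ℝ) + N + 1) ^ Fintype.card 𝒳 :=
  gjs_same_distribution_probability_bound_general P hP N n hN hn γ

end SeqClass
end

section
/- Let 𝒳 be a finite alphabet, let P, Q ∈ 𝒫(𝒳) have full support, let γ > 0 satisfy C(P,Q) > γ, and let C ∈ ℝ be an arbitrary constant. Let α* > 0 be the solution of GJS(Q, P, α) = γα. For each N, let X^N be drawn i.i.d. from Q, and define α*_N as the solution of GJS(T_{X^N}, P, α) = γα if a positive solution exists, and α*_N = C otherwise. Then α*_N converges in probability to α* as N → ∞. -/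
open Filter

namespace SeqClass

variable {𝒳 : Type*} [Fintype 𝒳] [DecidableEq 𝒳]

open scoped Classical in
/-- The empirical fixed point `α*_N`: a positive solution of `GJS(V, P, α) = γ α` if one
exists, and the constant `C` otherwise. -/
noncomputable def alphaSol (P : 𝒳 → ℝ) (γ C : ℝ) (V : 𝒳 → ℝ) : ℝ :=
  if h : ∃ α : ℝ, 0 < α ∧ GJS V P α = γ * α then h.choose else C

/-!
In the coordinate `t = α / (1 + α)` one has `GJS(V, P, α) - γα = (1 + α) ψ_V(t)`, where
`ψ_V(t) = H((1 - t)P + tV) - (1 - t)H(P) - tH(V) - γt` (`gjsGap P V γ t`) is concave on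
`[0, 1]` with `ψ_V(0) = 0`, and strictly concave for `V = Q`, because `C(P, Q) > γ > 0` forces
`P ≠ Q`. So `ψ_Q` is positive before `t* = α*/(1 + α*)` and negative after it; by continuity in
`V` the same signs hold at two fixed points `t₁ < t* < t₂` for all `V` near `Q`, and concavity
then confines every positive root of `ψ_V`, in particular the one defining `α*_N`, to `(t₁, t₂)`.
Finally the type of `X^N` concentrates at `Q` by Chebyshev's inequality, each coordinate having
variance `Q(a)(1 - Q(a))/N`.
-/

open Set Real Topology

theorem _root_.StrictConcaveOn.comp_affineMap {E F : Type*} [AddCommGroup E] [Module ℝ E]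
    [AddCommGroup F] [Module ℝ F] {f : F → ℝ} {s : Set F} (hf : StrictConcaveOn ℝ s f)
    (g : E →ᵃ[ℝ] F) (hg : Function.Injective g) : StrictConcaveOn ℝ (g ⁻¹' s) (f ∘ g) :=
  ⟨hf.1.affine_preimage g, fun x hx y hy hxy a b ha hb hab => by
    simpa only [Function.comp_apply, Convex.combo_affine_apply hab] using
      hf.2 hx hy (hg.ne hxy) ha hb hab⟩

theorem concaveOn_finset_sum {ι E : Type*} [AddCommGroup E] [Module ℝ E] {s : Set E}
    (hs : Convex ℝ s) {t : Finset ι} {f : ι → E → ℝ} (hf : ∀ i ∈ t, ConcaveOn ℝ s (f i)) :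
    ConcaveOn ℝ s (fun x => ∑ i ∈ t, f i x) := by
  induction t using Finset.cons_induction with
  | empty => simpa using concaveOn_const (0 : ℝ) hs
  | cons i t hi ih =>
    simp only [Finset.sum_cons]
    exact (hf i (t.mem_cons_self i)).add (ih fun j hj => hf j (Finset.mem_cons_of_mem hj))

theorem strictConcaveOn_finset_sum {ι E : Type*} [AddCommGroup E] [Module ℝ E] {s : Set E}
    (hs : Convex ℝ s) {t : Finset ι} {f : ι → E → ℝ} (hf : ∀ i ∈ t, ConcaveOn ℝ s (f i))
    {i : ι} (hi : i ∈ t) (hfi : StrictConcaveOn ℝ s (f i)) :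
    StrictConcaveOn ℝ s (fun x => ∑ j ∈ t, f j x) := by
  classical
  simp only [← Finset.add_sum_erase t _ hi]
  exact hfi.add_concaveOn
    (concaveOn_finset_sum hs fun j hj => hf j (Finset.mem_of_mem_erase hj))

theorem Icc_subset_preimage_lineMap_Ici {a b : ℝ} (ha : 0 ≤ a) (hb : 0 ≤ b) :
    Icc (0 : ℝ) 1 ⊆ AffineMap.lineMap a b ⁻¹' Ici 0 := fun t ht => by
  simp only [mem_preimage, AffineMap.lineMap_apply_ring, mem_Ici]
  nlinarith [ht.1, ht.2]

theorem concaveOn_negMulLog_lineMap {a b : ℝ} (ha : 0 ≤ a) (hb : 0 ≤ b) :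
    ConcaveOn ℝ (Icc 0 1) (fun t => negMulLog ((1 - t) * a + t * b)) := by
  have h := concaveOn_negMulLog.comp_affineMap (AffineMap.lineMap a b)
  simp only [Function.comp_def, AffineMap.lineMap_apply_ring] at h
  exact h.subset (Icc_subset_preimage_lineMap_Ici ha hb) (convex_Icc 0 1)

theorem strictConcaveOn_negMulLog_lineMap {a b : ℝ} (ha : 0 ≤ a) (hb : 0 ≤ b) (hab : a ≠ b) :
    StrictConcaveOn ℝ (Icc 0 1) (fun t => negMulLog ((1 - t) * a + t * b)) := by
  have h := strictConcaveOn_negMulLog.comp_affineMap (AffineMap.lineMap a b)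
    (AffineMap.lineMap_injective ℝ hab)
  simp only [Function.comp_def, AffineMap.lineMap_apply_ring] at h
  exact h.subset (Icc_subset_preimage_lineMap_Ici ha hb) (convex_Icc 0 1)

theorem mem_Ioo_of_concaveOn_of_apply_eq_zero {f : ℝ → ℝ} (hf : ConcaveOn ℝ (Icc 0 1) f)
    (hf0 : f 0 = 0) {a b t : ℝ} (ha : a ∈ Ioc 0 1) (hb : b ∈ Ioc 0 1) (hfa : 0 < f a)
    (hfb : f b < 0) (ht : t ∈ Ioc 0 1) (hft : f t = 0) : t ∈ Ioo a b := by
  have hslope (x : ℝ) : slope f 0 x = f x / x := by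
    rw [slope_def_field, hf0, sub_zero, sub_zero]
  have hanti := hf.antitoneOn_slope_gt (left_mem_Icc.2 zero_le_one)
  have mem {x : ℝ} (hx : x ∈ Ioc 0 1) : x ∈ {y ∈ Icc (0 : ℝ) 1 | 0 < y} :=
    ⟨Ioc_subset_Icc_self hx, hx.1⟩
  constructor
  · by_contra! hta
    have := hanti (mem ht) (mem ha) hta
    rw [hslope a, hslope t, hft, zero_div] at this
    exact (div_pos hfa ha.1).not_ge this
  · by_contra! hbt
    have := hanti (mem hb) (mem ht) hbt
    rw [hslope b, hslope t, hft, zero_div] at this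
    exact (div_neg_of_neg_of_pos hfb hb.1).not_ge this

theorem pos_and_neg_of_strictConcaveOn_of_apply_eq_zero {f : ℝ → ℝ}
    (hf : StrictConcaveOn ℝ (Icc 0 1) f) (hf0 : f 0 = 0) {s t u : ℝ} (hs : 0 < s) (hst : s < t)
    (htu : t < u) (hu : u ≤ 1) (hft : f t = 0) : 0 < f s ∧ f u < 0 := by
  have h0 : (0 : ℝ) ∈ Icc 0 1 := left_mem_Icc.2 zero_le_one
  have hsec {x y : ℝ} (hx : 0 < x) (hxy : x < y) (hy : y ≤ 1) : f y / y < f x / x := by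
    simpa only [hf0, sub_zero] using hf.secant_strict_mono h0 ⟨hx.le, by linarith⟩
      ⟨by linarith, hy⟩ hx.ne' (by linarith) hxy
  have h1 := hsec hs hst (by linarith)
  have h2 := hsec (hs.trans hst) htu hu
  rw [hft, zero_div] at h1 h2
  exact ⟨(div_pos_iff_of_pos_right hs).1 h1, by simpa using (div_lt_iff₀ (by linarith)).1 h2⟩

theorem concaveOn_mul_sub_const (c d : ℝ) {s : Set ℝ} (hs : Convex ℝ s) :
    ConcaveOn ℝ s (fun t => c * t - d) :=
  ((LinearMap.mulLeft ℝ c).concaveOn hs).sub (convexOn_const d hs)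

theorem mul_log_div_eq {x m : ℝ} (h : x ≠ 0 → m ≠ 0) :
    x * log (x / m) = -negMulLog x - x * log m := by
  rcases eq_or_ne x 0 with rfl | hx
  · simp
  · rw [log_div hx (h hx), negMulLog]
    ring

theorem div_one_add_lt_div_one_add_iff {a b : ℝ} (ha : 0 ≤ a) (hb : 0 ≤ b) :
    a / (1 + a) < b / (1 + b) ↔ a < b := by
  rw [div_lt_div_iff₀ (by linarith) (by linarith)]
  constructor <;> intro h <;> nlinarith

theorem div_one_add_mem_Ioo {a : ℝ} (ha : 0 < a) : a / (1 + a) ∈ Ioo 0 1 :=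
  ⟨by positivity, (div_lt_one (by linarith)).2 (by linarith)⟩

section Entropy

omit [DecidableEq 𝒳]

theorem shEnt_eq_sum_negMulLog (P : 𝒳 → ℝ) : shEnt P = ∑ x, negMulLog (P x) := by
  simp [shEnt, negMulLog, Finset.sum_neg_distrib]

noncomputable def gjsGap (P V : 𝒳 → ℝ) (γ t : ℝ) : ℝ :=
  shEnt (fun x => (1 - t) * P x + t * V x) - ((1 - t) * shEnt P + t * shEnt V) - γ * t

variable {P V : 𝒳 → ℝ} {γ : ℝ}

@[simp]
theorem gjsGap_zero : gjsGap P V γ 0 = 0 := by simp [gjsGap]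

theorem gjsGap_eq_sum_negMulLog_add (P V : 𝒳 → ℝ) (γ : ℝ) :
    gjsGap P V γ = fun t =>
      ∑ x, negMulLog ((1 - t) * P x + t * V x) + ((shEnt P - shEnt V - γ) * t - shEnt P) := by
  funext t
  rw [gjsGap, shEnt_eq_sum_negMulLog (fun x => _)]
  ring

theorem GJS_sub_mul_eq (hP : ∀ x, 0 ≤ P x) (hV : ∀ x, 0 ≤ V x) (γ : ℝ) {α : ℝ} (hα : 0 < α) :
    GJS V P α - γ * α = (1 + α) * gjsGap P V γ (α / (1 + α)) := by
  have h1α : 0 < 1 + α := by linarith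
  have hM (x : 𝒳) : (1 + α) * mix V P α x = α * V x + P x := by
    rw [mix]
    field_simp
  have hmix : (fun x => (1 - α / (1 + α)) * P x + α / (1 + α) * V x) = mix V P α := by
    funext x
    rw [mix]
    field_simp
    ring
  have hM0 (x : 𝒳) (hMx : mix V P α x = 0) : V x = 0 ∧ P x = 0 := by
    have := hM x
    rw [hMx, mul_zero] at this
    constructor <;> nlinarith [hV x, hP x]
  have hterm (x : 𝒳) : α * (V x * log (V x / mix V P α x)) + P x * log (P x / mix V P α x) =
      (1 + α) * negMulLog (mix V P α x) - α * negMulLog (V x) - negMulLog (P x) := by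
    rw [mul_log_div_eq fun hVx hMx => hVx (hM0 x hMx).1,
      mul_log_div_eq fun hPx hMx => hPx (hM0 x hMx).2]
    simp only [negMulLog]
    linear_combination log (mix V P α x) * hM x
  rw [GJS, KL, KL, Finset.mul_sum, ← Finset.sum_add_distrib,
    Finset.sum_congr rfl fun x _ => hterm x, gjsGap, hmix]
  simp only [shEnt_eq_sum_negMulLog, Finset.sum_sub_distrib, ← Finset.mul_sum]
  field_simp
  ring

theorem GJS_eq_mul_iff (hP : ∀ x, 0 ≤ P x) (hV : ∀ x, 0 ≤ V x) {α : ℝ} (hα : 0 < α) :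
    GJS V P α = γ * α ↔ gjsGap P V γ (α / (1 + α)) = 0 := by
  rw [← sub_eq_zero, GJS_sub_mul_eq hP hV γ hα, mul_eq_zero, or_iff_right (by linarith)]

theorem concaveOn_gjsGap (hP : ∀ x, 0 ≤ P x) (hV : ∀ x, 0 ≤ V x) (γ : ℝ) :
    ConcaveOn ℝ (Icc 0 1) (gjsGap P V γ) := by
  rw [gjsGap_eq_sum_negMulLog_add]
  exact (concaveOn_finset_sum (convex_Icc 0 1) fun x _ =>
    concaveOn_negMulLog_lineMap (hP x) (hV x)).add (concaveOn_mul_sub_const _ _ (convex_Icc 0 1))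

theorem strictConcaveOn_gjsGap (hP : ∀ x, 0 ≤ P x) (hV : ∀ x, 0 ≤ V x) (hPV : P ≠ V)
    (γ : ℝ) : StrictConcaveOn ℝ (Icc 0 1) (gjsGap P V γ) := by
  obtain ⟨x₀, hx₀⟩ := Function.ne_iff.1 hPV
  rw [gjsGap_eq_sum_negMulLog_add]
  exact (strictConcaveOn_finset_sum (convex_Icc 0 1)
    (fun x _ => concaveOn_negMulLog_lineMap (hP x) (hV x)) (Finset.mem_univ x₀)
    (strictConcaveOn_negMulLog_lineMap (hP x₀) (hV x₀) hx₀)).add_concaveOn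
    (concaveOn_mul_sub_const _ _ (convex_Icc 0 1))

theorem continuous_gjsGap (P V : 𝒳 → ℝ) (γ : ℝ) : Continuous (gjsGap P V γ) := by
  rw [gjsGap_eq_sum_negMulLog_add]
  fun_prop

theorem continuous_gjsGap_left (P : 𝒳 → ℝ) (γ t : ℝ) : Continuous (fun V => gjsGap P V γ t) := by
  simp only [gjsGap_eq_sum_negMulLog_add, shEnt_eq_sum_negMulLog]
  fun_prop

theorem chernoff_self (hP : IsPMF P) : chernoff P P = 0 := by
  have h (η : Icc (0 : ℝ) 1) : log (∑ x, P x ^ (η : ℝ) * P x ^ (1 - (η : ℝ))) = 0 := by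
    simp_rw [← rpow_add' (hP.1 _) (by simp : (η : ℝ) + (1 - η) ≠ 0), add_sub_cancel, rpow_one,
      hP.2, log_one]
  simp [chernoff, h]

theorem exists_pos_GJS_eq_mul (hP : ∀ x, 0 ≤ P x) (hV : ∀ x, 0 ≤ V x) {α₁ α₂ : ℝ}
    (hα₁ : 0 < α₁) (hα₂ : 0 < α₂) (h₁ : 0 < gjsGap P V γ (α₁ / (1 + α₁)))
    (h₂ : gjsGap P V γ (α₂ / (1 + α₂)) < 0) : ∃ α, 0 < α ∧ GJS V P α = γ * α := by
  obtain ⟨t, ht, hψt⟩ := intermediate_value_uIcc (continuous_gjsGap P V γ).continuousOn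
    (mem_uIcc.2 (Or.inr ⟨h₂.le, h₁.le⟩))
  obtain ⟨ht0, ht1⟩ := ordConnected_Ioo.uIcc_subset (div_one_add_mem_Ioo hα₁)
    (div_one_add_mem_Ioo hα₂) ht
  have h1t : 0 < 1 - t := by linarith
  refine ⟨t / (1 - t), by positivity, (GJS_eq_mul_iff hP hV (by positivity)).2 ?_⟩
  rwa [show t / (1 - t) / (1 + t / (1 - t)) = t by field_simp; ring]

theorem alphaSol_mem_Ioo (hP : ∀ x, 0 ≤ P x) (hV : ∀ x, 0 ≤ V x) (C : ℝ) {α₁ α₂ : ℝ}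
    (hα₁ : 0 < α₁) (hα₂ : 0 < α₂) (h₁ : 0 < gjsGap P V γ (α₁ / (1 + α₁)))
    (h₂ : gjsGap P V γ (α₂ / (1 + α₂)) < 0) : alphaSol P γ C V ∈ Ioo α₁ α₂ := by
  have hex := exists_pos_GJS_eq_mul hP hV hα₁ hα₂ h₁ h₂
  obtain ⟨hα, hαeq⟩ := hex.choose_spec
  rw [alphaSol, dif_pos hex]
  have := mem_Ioo_of_concaveOn_of_apply_eq_zero (concaveOn_gjsGap hP hV γ) gjsGap_zero
    (Ioo_subset_Ioc_self (div_one_add_mem_Ioo hα₁)) (Ioo_subset_Ioc_self (div_one_add_mem_Ioo hα₂))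
    h₁ h₂ (Ioo_subset_Ioc_self (div_one_add_mem_Ioo hα)) ((GJS_eq_mul_iff hP hV hα).1 hαeq)
  exact ⟨(div_one_add_lt_div_one_add_iff hα₁.le hα.le).1 this.1,
    (div_one_add_lt_div_one_add_iff hα.le hα₂.le).1 this.2⟩

theorem eventually_abs_alphaSol_sub_lt {Q : 𝒳 → ℝ} (hP : ∀ x, 0 ≤ P x) (hQ : ∀ x, 0 ≤ Q x)
    (hPQ : P ≠ Q) (C : ℝ) {α : ℝ} (hα : 0 < α) (hαeq : GJS Q P α = γ * α) {ε : ℝ} (hε : 0 < ε) :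
    ∀ᶠ V in 𝓝 Q, (∀ x, 0 ≤ V x) → |alphaSol P γ C V - α| < ε := by
  set α₁ := α - min ε α / 2 with hα₁_def
  set α₂ := α + ε / 2 with hα₂_def
  have hα₁ : 0 < α₁ := by linarith [min_le_right ε α]
  have hα₂ : 0 < α₂ := by positivity
  obtain ⟨h₁, h₂⟩ := pos_and_neg_of_strictConcaveOn_of_apply_eq_zero
    (strictConcaveOn_gjsGap hP hQ hPQ γ) gjsGap_zero (div_one_add_mem_Ioo hα₁).1
    ((div_one_add_lt_div_one_add_iff hα₁.le hα.le).2 (by linarith [lt_min hε hα]))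
    ((div_one_add_lt_div_one_add_iff hα.le hα₂.le).2 (by linarith))
    (div_one_add_mem_Ioo hα₂).2.le ((GJS_eq_mul_iff hP hQ hα).1 hαeq)
  filter_upwards [((continuous_gjsGap_left P γ _).tendsto Q).eventually_const_lt h₁,
    ((continuous_gjsGap_left P γ _).tendsto Q).eventually_lt_const h₂] with V hV₁ hV₂ hV
  have := alphaSol_mem_Ioo hP hV C hα₁ hα₂ hV₁ hV₂
  rw [abs_sub_lt_iff]
  constructor <;> linarith [this.1, this.2, min_le_left ε α]

end Entropy

section ProductMeasure

omit [DecidableEq 𝒳]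

variable {Q : 𝒳 → ℝ} {N : ℕ}

omit [Fintype 𝒳] in
theorem prodProb_nonneg (hQ : ∀ a, 0 ≤ Q a) (x : Fin N → 𝒳) : 0 ≤ prodProb Q x :=
  Finset.prod_nonneg fun i _ => hQ (x i)

theorem sum_ite_prodProb_nonneg (hQ : ∀ a, 0 ≤ Q a) (p : (Fin N → 𝒳) → Prop) [DecidablePred p] :
    0 ≤ ∑ x, if p x then prodProb Q x else 0 :=
  Finset.sum_nonneg fun x _ => ite_nonneg (prodProb_nonneg hQ x) le_rfl

theorem sum_ite_prodProb_mono (hQ : ∀ a, 0 ≤ Q a) {p q : (Fin N → 𝒳) → Prop} [DecidablePred p]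
    [DecidablePred q] (h : ∀ x, p x → q x) :
    ∑ x, (if p x then prodProb Q x else 0) ≤ ∑ x, if q x then prodProb Q x else 0 :=
  Finset.sum_le_sum fun x _ => by
    by_cases hp : p x
    · simp [hp, h x hp]
    · simpa [hp] using ite_nonneg (prodProb_nonneg hQ x) le_rfl

theorem sum_prodProb_mul_prod (Q : 𝒳 → ℝ) (g : Fin N → 𝒳 → ℝ) :
    ∑ x : Fin N → 𝒳, prodProb Q x * ∏ i, g i (x i) = ∏ i, ∑ a, Q a * g i a := by
  simp only [prodProb, ← Finset.prod_mul_distrib]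
  exact (Fintype.prod_sum fun i a => Q a * g i a).symm

theorem sum_prodProb_mul_apply (hQ : ∑ a, Q a = 1) (i : Fin N) (f : 𝒳 → ℝ) :
    ∑ x : Fin N → 𝒳, prodProb Q x * f (x i) = ∑ a, Q a * f a := by
  have hprod (x : Fin N → 𝒳) : ∏ k, (if k = i then f (x k) else 1) = f (x i) := by simp
  have hsum : ∏ k, ∑ a, Q a * (if k = i then f a else 1) = ∑ a, Q a * f a := by
    rw [Fintype.prod_eq_single i fun k hk => by simp [hk, hQ]]
    simp
  simp only [← hprod]
  exact (sum_prodProb_mul_prod Q _).trans hsum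

theorem sum_prodProb_mul_apply_mul_apply (hQ : ∑ a, Q a = 1) {i j : Fin N} (hij : i ≠ j)
    (f g : 𝒳 → ℝ) :
    ∑ x : Fin N → 𝒳, prodProb Q x * (f (x i) * g (x j)) =
      (∑ a, Q a * f a) * ∑ a, Q a * g a := by
  have hprod (x : Fin N → 𝒳) :
      ∏ k, (if k = i then f (x k) else if k = j then g (x k) else 1) = f (x i) * g (x j) := by
    rw [Fintype.prod_eq_mul i j hij fun k hk => by simp [hk.1, hk.2]]
    simp [hij.symm]
  have hsum : ∏ k, ∑ a, Q a * (if k = i then f a else if k = j then g a else 1) =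
      (∑ a, Q a * f a) * ∑ a, Q a * g a := by
    rw [Fintype.prod_eq_mul i j hij fun k hk => by simp [hk.1, hk.2, hQ]]
    simp [hij.symm]
  simp only [← hprod]
  exact (sum_prodProb_mul_prod Q _).trans hsum

theorem sum_prodProb_mul_sum_sq (hQ : ∑ a, Q a = 1) {f : 𝒳 → ℝ} (hf : ∑ a, Q a * f a = 0) :
    ∑ x : Fin N → 𝒳, prodProb Q x * (∑ i, f (x i)) ^ 2 = N * ∑ a, Q a * f a ^ 2 := by
  have hcov (i j : Fin N) : ∑ x : Fin N → 𝒳, prodProb Q x * (f (x i) * f (x j)) =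
      if i = j then ∑ a, Q a * f a ^ 2 else 0 := by
    split_ifs with hij
    · subst hij
      exact (sum_prodProb_mul_apply hQ i fun a => f a * f a).trans (by simp only [sq])
    · rw [sum_prodProb_mul_apply_mul_apply hQ hij, hf, zero_mul]
  calc ∑ x : Fin N → 𝒳, prodProb Q x * (∑ i, f (x i)) ^ 2
      = ∑ i, ∑ j, ∑ x : Fin N → 𝒳, prodProb Q x * (f (x i) * f (x j)) := by
        simp only [sq, Finset.sum_mul_sum]
        simp only [Finset.mul_sum]
        rw [Finset.sum_comm]
        exact Finset.sum_congr rfl fun i _ => Finset.sum_comm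
    _ = N * ∑ a, Q a * f a ^ 2 := by simp [hcov]

end ProductMeasure

section Concentration

variable {Q : 𝒳 → ℝ} {N : ℕ}

omit [Fintype 𝒳] in
theorem empDist_nonneg (x : Fin N → 𝒳) (a : 𝒳) : 0 ≤ empDist x a := by
  unfold empDist
  positivity

theorem sum_prodProb_mul_empDist_sub_sq (hQ : IsPMF Q) (a : 𝒳) (hN : 0 < N) :
    ∑ x : Fin N → 𝒳, prodProb Q x * (empDist x a - Q a) ^ 2 = Q a * (1 - Q a) / N := by
  set d : 𝒳 → ℝ := fun b => (if b = a then 1 else 0) - Q a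
  have hemp (x : Fin N → 𝒳) : empDist x a - Q a = (∑ i, d (x i)) / N := by
    simp only [empDist, d, Finset.sum_sub_distrib, Finset.sum_boole, Finset.sum_const,
      Finset.card_univ, Fintype.card_fin, nsmul_eq_mul]
    field_simp
  have hd : ∑ b, Q b * d b = 0 := by
    simp [d, mul_sub, Finset.sum_sub_distrib, ← Finset.sum_mul, hQ.2]
  have hd2 : ∑ b, Q b * d b ^ 2 = Q a * (1 - Q a) := by
    simp [d, sub_sq, mul_add, mul_sub, Finset.sum_add_distrib, Finset.sum_sub_distrib,
      ← Finset.sum_mul, hQ.2]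
    ring
  simp_rw [hemp, div_pow, mul_div_assoc', ← Finset.sum_div, sum_prodProb_mul_sum_sq hQ.2 hd, hd2]
  field_simp

theorem sum_prodProb_exists_le_abs_empDist_sub_le (hQ : IsPMF Q) {δ : ℝ} (hδ : 0 < δ)
    (hN : 0 < N) :
    ∑ x : Fin N → 𝒳, (if ∃ a, δ ≤ |empDist x a - Q a| then prodProb Q x else 0) ≤
      1 / δ ^ 2 / N := by
  have hterm_nonneg (x : Fin N → 𝒳) (a : 𝒳) :
      0 ≤ prodProb Q x * (empDist x a - Q a) ^ 2 / δ ^ 2 := by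
    have := prodProb_nonneg hQ.1 x
    positivity
  have hpoint (x : Fin N → 𝒳) : (if ∃ a, δ ≤ |empDist x a - Q a| then prodProb Q x else 0) ≤
      ∑ a, prodProb Q x * (empDist x a - Q a) ^ 2 / δ ^ 2 := by
    split_ifs with h
    · obtain ⟨a, ha⟩ := h
      have hsq : δ ^ 2 ≤ (empDist x a - Q a) ^ 2 := by
        simpa only [sq_abs] using pow_le_pow_left₀ hδ.le ha 2
      calc prodProb Q x ≤ prodProb Q x * (empDist x a - Q a) ^ 2 / δ ^ 2 := by
            rw [le_div_iff₀ (by positivity)]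
            exact mul_le_mul_of_nonneg_left hsq (prodProb_nonneg hQ.1 x)
        _ ≤ _ := Finset.single_le_sum (fun b _ => hterm_nonneg x b) (Finset.mem_univ a)
    · exact Finset.sum_nonneg fun a _ => hterm_nonneg x a
  calc _ ≤ ∑ x : Fin N → 𝒳, ∑ a, prodProb Q x * (empDist x a - Q a) ^ 2 / δ ^ 2 :=
        Finset.sum_le_sum fun x _ => hpoint x
    _ = ∑ a, Q a * (1 - Q a) / N / δ ^ 2 := by
        rw [Finset.sum_comm]
        simp only [← Finset.sum_div, sum_prodProb_mul_empDist_sub_sq hQ _ hN]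
    _ ≤ ∑ a, Q a / N / δ ^ 2 := by
        gcongr with a
        nlinarith [hQ.1 a]
    _ = 1 / δ ^ 2 / N := by
        rw [← Finset.sum_div, ← Finset.sum_div, hQ.2]
        ring

theorem tendsto_sum_prodProb_empDist_notMem (hQ : IsPMF Q) {U : Set (𝒳 → ℝ)}
    [DecidablePred (· ∈ U)] (hU : U ∈ 𝓝 Q) :
    Tendsto (fun N => ∑ x : Fin N → 𝒳, if empDist x ∉ U then prodProb Q x else 0) atTop
      (𝓝 0) := by
  obtain ⟨δ, hδ, hball⟩ := Metric.mem_nhds_iff.1 hU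
  have hfar {N : ℕ} (x : Fin N → 𝒳) (hx : empDist x ∉ U) : ∃ a, δ ≤ |empDist x a - Q a| := by
    by_contra! h
    exact hx (hball ((dist_pi_lt_iff hδ).2 fun a => (Real.dist_eq _ _).trans_lt (h a)))
  refine squeeze_zero' (Eventually.of_forall fun N => sum_ite_prodProb_nonneg hQ.1 _) ?_
    (tendsto_const_div_atTop_nhds_zero_nat (1 / δ ^ 2))
  filter_upwards [eventually_gt_atTop 0] with N hN
  exact (sum_ite_prodProb_mono hQ.1 hfar).trans
    (sum_prodProb_exists_le_abs_empDist_sub_le hQ hδ hN)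

end Concentration

theorem empirical_fixed_point_converges_in_probability_general
    (P Q : 𝒳 → ℝ) (hP : IsPMF P) (hQ : IsPMF Q)
    (γ : ℝ) (hγ0 : 0 < γ) (hγC : γ < chernoff P Q) (C : ℝ)
    (αstar : ℝ) (hα0 : 0 < αstar) (hαeq : GJS Q P αstar = γ * αstar) :
    ∀ ε : ℝ, 0 < ε →
      Filter.Tendsto
        (fun N : ℕ => ∑ x : Fin N → 𝒳,
          if ε ≤ |alphaSol P γ C (empDist x) - αstar| then prodProb Q x else 0)
        Filter.atTop (nhds 0) := by
  intro ε hε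
  have hPQ : P ≠ Q := by
    rintro rfl
    linarith [chernoff_self hP]
  have hnear := eventually_abs_alphaSol_sub_lt hP.1 hQ.1 hPQ C hα0 hαeq hε
  refine squeeze_zero (fun N => sum_ite_prodProb_nonneg hQ.1 _) (fun N => ?_)
    (tendsto_sum_prodProb_empDist_notMem hQ hnear)
  exact sum_ite_prodProb_mono hQ.1 fun x hx hnear_x => hx.not_gt (hnear_x (empDist_nonneg x))

theorem empirical_fixed_point_converges_in_probability
    (P Q : 𝒳 → ℝ) (hP : IsPMF P) (hQ : IsPMF Q)
    (hsP : FullSupport P) (hsQ : FullSupport Q)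
    (γ : ℝ) (hγ0 : 0 < γ) (hγC : γ < chernoff P Q) (C : ℝ)
    (αstar : ℝ) (hα0 : 0 < αstar) (hαeq : GJS Q P αstar = γ * αstar) :
    ∀ ε : ℝ, 0 < ε →
      Filter.Tendsto
        (fun N : ℕ => ∑ x : Fin N → 𝒳,
          if ε ≤ |alphaSol P γ C (empDist x) - αstar| then prodProb Q x else 0)
        Filter.atTop (nhds 0) :=
  empirical_fixed_point_converges_in_probability_general P Q hP hQ γ hγ0 hγC C αstar hα0 hαeq

end SeqClass
end
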